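/- arXiv:1506.04174 — 10 statements merged into one kernel-verified Lean document; each statement's English description precedes it below -/
import Mathlib

section
/- A permutation of [n] that avoids the pattern 123 has at most two fixed points. Moreover, at most one fixed point lies in the interval [1, n/2] and at most one lies in (n/2, n]. -/
/-!
If `i < j` are fixed points of a permutation of `[n]` and `j ≤ n/2`, the `n - j` positions after
`j` cannot all be sent into the `j - 2` values below `j` other than `i`, so some `k > j` has
`τ k > j`, and `i, j, k` is a `123`. Reversing positions and values turns the upper half into the
lower half, and the two halves together give at most two fixed points.
-/

open Finset

def Avoids123 {n : ℕ} (f : Fin n → Fin n) : Prop :=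
  ¬ ∃ i j k : Fin n, i < j ∧ j < k ∧ f i < f j ∧ f j < f k

theorem Finset.card_le_one_of_forall_not_lt {α : Type*} [LinearOrder α] {s : Finset α}
    (h : ∀ a ∈ s, ∀ b ∈ s, ¬ a < b) : #s ≤ 1 :=
  card_le_one.2 fun a ha b hb => le_antisymm (not_lt.1 (h b hb a ha)) (not_lt.1 (h a ha b hb))

section FixedPoints

variable {n : ℕ} {f : Fin n → Fin n}

theorem exists_gt_lt_apply_of_fixed_lt (hf : Function.Injective f) {i j : Fin n}
    (hi : f i = i) (hj : f j = j) (hij : i < j) (hjn : 2 * (j : ℕ) < n) :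
    ∃ k, j < k ∧ j < f k := by
  by_contra! h
  have hmaps : ∀ k ∈ Ioi j, f k ∈ (Iio j).erase i := by
    intro k hk
    rw [mem_Ioi] at hk
    have hkj : f k ≠ j := hj ▸ hf.ne hk.ne'
    have hki : f k ≠ i := hi ▸ hf.ne (hij.trans hk).ne'
    exact mem_erase.2 ⟨hki, mem_Iio.2 ((h k hk).lt_of_ne hkj)⟩
  have hcard := card_le_card_of_injOn f hmaps hf.injOn
  rw [Fin.card_Ioi, card_erase_of_mem (mem_Iio.2 hij), Fin.card_Iio] at hcard
  omega

theorem exists_lt_apply_lt_of_fixed_lt (hf : Function.Injective f) {i j : Fin n}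
    (hi : f i = i) (hj : f j = j) (hij : i < j) (hin : n < 2 * ((i : ℕ) + 1)) :
    ∃ k, k < i ∧ f k < i := by
  have hg : Function.Injective (Fin.rev ∘ f ∘ Fin.rev) :=
    Fin.rev_injective.comp (hf.comp Fin.rev_injective)
  obtain ⟨k, hik, hfk⟩ := exists_gt_lt_apply_of_fixed_lt hg
    (i := j.rev) (j := i.rev) (by simp [hj]) (by simp [hi]) (Fin.rev_lt_rev.2 hij)
    (by rw [Fin.val_rev]; omega)
  exact ⟨k.rev, Fin.rev_lt_iff.2 hik, by simpa [Fin.lt_rev_iff] using hfk⟩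

theorem Avoids123.card_fixed_lowerHalf_le_one (havoid : Avoids123 f) (hf : Function.Injective f) :
    #{i | f i = i ∧ 2 * ((i : ℕ) + 1) ≤ n} ≤ 1 := by
  refine card_le_one_of_forall_not_lt ?_
  simp only [mem_filter, mem_univ, true_and]
  rintro a ⟨ha, -⟩ b ⟨hb, hbn⟩ hab
  obtain ⟨k, hbk, hfk⟩ := exists_gt_lt_apply_of_fixed_lt hf ha hb hab (by omega)
  exact havoid ⟨a, b, k, hab, hbk, by rwa [ha, hb], by rwa [hb]⟩

theorem Avoids123.card_fixed_upperHalf_le_one (havoid : Avoids123 f) (hf : Function.Injective f) :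
    #{i | f i = i ∧ n < 2 * ((i : ℕ) + 1)} ≤ 1 := by
  refine card_le_one_of_forall_not_lt ?_
  simp only [mem_filter, mem_univ, true_and]
  rintro a ⟨ha, han⟩ b ⟨hb, -⟩ hab
  obtain ⟨k, hka, hfk⟩ := exists_lt_apply_lt_of_fixed_lt hf ha hb hab han
  exact havoid ⟨k, a, b, hka, hab, by rwa [ha], by rwa [ha, hb]⟩

end FixedPoints

/-- A 123-avoiding permutation of [n] has at most two fixed points; at most one
fixed point lies in [1, n/2] and at most one in (n/2, n].  (Indices are 0-based,
so index `i : Fin n` corresponds to the element `i + 1` of `[n]`.) -/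
theorem fixed_points_of_123_avoiding (n : ℕ) (τ : Equiv.Perm (Fin n))
    (havoid : ¬ ∃ i j k : Fin n, i < j ∧ j < k ∧ τ i < τ j ∧ τ j < τ k) :
    (Finset.univ.filter (fun i : Fin n => τ i = i)).card ≤ 2 ∧
    (Finset.univ.filter (fun i : Fin n => τ i = i ∧ 2 * ((i : ℕ) + 1) ≤ n)).card ≤ 1 ∧
    (Finset.univ.filter (fun i : Fin n => τ i = i ∧ n < 2 * ((i : ℕ) + 1))).card ≤ 1 := by
  have hlow := Avoids123.card_fixed_lowerHalf_le_one havoid τ.injective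
  have hhigh := Avoids123.card_fixed_upperHalf_le_one havoid τ.injective
  refine ⟨?_, hlow, hhigh⟩
  calc #{i | τ i = i}
      ≤ #(({i | τ i = i ∧ 2 * ((i : ℕ) + 1) ≤ n} : Finset (Fin n)) ∪
          ({i | τ i = i ∧ n < 2 * ((i : ℕ) + 1)} : Finset (Fin n))) :=
        card_le_card fun i hi => by
          simp only [mem_filter, mem_univ, true_and, mem_union] at hi ⊢
          omega
    _ ≤ 2 := (card_union_le _ _).trans (by omega)
end

section
/- Let γ be a Dyck path of length 2n and τ_γ the 321-avoiding permutation obtained from γ via the Billey–Jockusch–Stanley bijection. Then for every j in {1,...,n}, τ_γ(j) > j if j ∈ D (the set of partial sums of descent-run lengths), and τ_γ(j) ≤ j if j ∉ D. -/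
/-!
For `j ∈ 𝒟`, say `j = D i`, we have `τ j = A i + 1 > A i ≥ D i = j` because the path stays
weakly above the diagonal. For `j ∉ 𝒟`, since `τ` is increasing from the complement of `𝒟`
onto the complement of `1 + 𝒜`, `τ j > j` would force strictly fewer elements of `[1, j] \ (1 + 𝒜)`
than of `[1, j] \ 𝒟`. But every `A i + 1 ≤ j` comes with a distinct `D i ≤ A i < j`, so
`[1, j]` meets `1 + 𝒜` in at most as many points as it meets `𝒟`.
-/

open Finset

theorem card_filter_le_lt_card_filter_le_of_lt_apply {α : Type*} [LinearOrder α] {f : α → α}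
    {S T : Finset α} (hf : StrictMonoOn f S) (hST : Set.SurjOn f S T) {x : α} (hx : x ∈ S)
    (hlt : x < f x) : #{t ∈ T | t ≤ x} < #{s ∈ S | s ≤ x} :=
  calc #{t ∈ T | t ≤ x} ≤ #({s ∈ S | s < x}.image f) := by
        refine card_le_card fun t ht => ?_
        obtain ⟨htT, htx⟩ := mem_filter.1 ht
        obtain ⟨s, hs, rfl⟩ := hST htT
        exact mem_image_of_mem f (mem_filter.2 ⟨hs, (hf.lt_iff_lt hs hx).1 (htx.trans_lt hlt)⟩)
    _ ≤ #{s ∈ S | s < x} := card_image_le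
    _ < #{s ∈ S | s ≤ x} := by
        refine card_lt_card ((ssubset_iff_of_subset ?_).2 ⟨x, mem_filter.2 ⟨hx, le_rfl⟩, ?_⟩)
        · exact fun s hs => mem_filter.2 ⟨(mem_filter.1 hs).1, (mem_filter.1 hs).2.le⟩
        · simp

theorem card_Icc_sdiff_image_le_of_le {ι : Type*} (I : Finset ι) {f g : ι → ℕ}
    (hg : Set.InjOn g I) (hg_pos : ∀ i ∈ I, 1 ≤ g i) (hgf : ∀ i ∈ I, g i ≤ f i) (j : ℕ) :
    #(Icc 1 j \ I.image g) ≤ #(Icc 1 j \ I.image f) := by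
  have hg_inter : #(Icc 1 j ∩ I.image g) = #{i ∈ I | g i ≤ j} := by
    have : Icc 1 j ∩ I.image g = {y ∈ I.image g | y ≤ j} := by
      ext y
      simp only [mem_inter, mem_Icc, mem_filter, mem_image]
      constructor
      · rintro ⟨⟨-, hyj⟩, hy⟩
        exact ⟨hy, hyj⟩
      · rintro ⟨⟨i, hi, rfl⟩, hij⟩
        exact ⟨⟨hg_pos i hi, hij⟩, i, hi, rfl⟩
    rw [this, filter_image, card_image_of_injOn (hg.mono (coe_subset.2 (filter_subset _ I)))]
  have hf_inter : #(Icc 1 j ∩ I.image f) ≤ #{i ∈ I | f i ≤ j} :=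
    calc #(Icc 1 j ∩ I.image f) ≤ #{y ∈ I.image f | y ≤ j} :=
          card_le_card fun y hy => by
            simp only [mem_inter, mem_Icc] at hy
            exact mem_filter.2 ⟨hy.2, hy.1.2⟩
      _ ≤ #{i ∈ I | f i ≤ j} := by rw [filter_image]; exact card_image_le
  have hfg : #{i ∈ I | f i ≤ j} ≤ #{i ∈ I | g i ≤ j} :=
    card_le_card fun i hi => by
      simp only [mem_filter] at hi ⊢
      exact ⟨hi.1, (hgf i hi.1).trans hi.2⟩
  have := card_sdiff_add_card_inter (Icc 1 j) (I.image g)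
  have := card_sdiff_add_card_inter (Icc 1 j) (I.image f)
  simp only [Nat.card_Icc] at *
  omega

theorem filter_le_Icc_sdiff {n j : ℕ} (hj : j ≤ n) (X : Finset ℕ) :
    {x ∈ Icc 1 n \ X | x ≤ j} = Icc 1 j \ X := by
  ext x
  simp only [mem_filter, mem_sdiff, mem_Icc]
  grind

theorem bjs_above_below_diagonal_general (n m : ℕ) (A D : ℕ → ℕ) (τ : ℕ → ℕ)
    (hD0 : D 0 = 0)
    (hDstep : ∀ i < m, D i < D (i + 1))
    (hDA : ∀ i ≤ m, D i ≤ A i)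
    (hτD : ∀ i, 1 ≤ i → i ≤ m - 1 → τ (D i) = A i + 1)
    (hτmono : ∀ j k : ℕ, j ∈ Finset.Icc 1 n → k ∈ Finset.Icc 1 n →
      j ∉ (Finset.Icc 1 (m - 1)).image D → k ∉ (Finset.Icc 1 (m - 1)).image D →
      j < k → τ j < τ k)
    (hτbij : Set.BijOn τ
      ↑(Finset.Icc 1 n \ (Finset.Icc 1 (m - 1)).image D)
      ↑(Finset.Icc 1 n \ (Finset.Icc 1 (m - 1)).image (fun i => A i + 1))) :
    ∀ j ∈ Finset.Icc 1 n,
      (j ∈ (Finset.Icc 1 (m - 1)).image D → j < τ j) ∧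
      (j ∉ (Finset.Icc 1 (m - 1)).image D → τ j ≤ j) := by
  have hD : StrictMonoOn D (Set.Iic m) := strictMonoOn_Iic_of_lt_succ hDstep
  have hIcc : ∀ i ∈ Icc 1 (m - 1), i ∈ Set.Iic m := fun i hi => by
    simp only [mem_Icc] at hi
    exact Set.mem_Iic.2 (by omega)
  intro j hj
  refine ⟨fun hjD => ?_, fun hjD => ?_⟩
  · obtain ⟨i, hi, rfl⟩ := mem_image.1 hjD
    rw [hτD i (mem_Icc.1 hi).1 (mem_Icc.1 hi).2]
    exact Nat.lt_succ_of_le (hDA i (hIcc i hi))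
  · by_contra! hlt
    have hτ : StrictMonoOn τ ↑(Icc 1 n \ (Icc 1 (m - 1)).image D) := fun a ha b hb =>
      hτmono a b (mem_sdiff.1 ha).1 (mem_sdiff.1 hb).1 (mem_sdiff.1 ha).2 (mem_sdiff.1 hb).2
    have hcount := card_filter_le_lt_card_filter_le_of_lt_apply hτ hτbij.surjOn
      (mem_sdiff.2 ⟨hj, hjD⟩) hlt
    rw [filter_le_Icc_sdiff (mem_Icc.1 hj).2, filter_le_Icc_sdiff (mem_Icc.1 hj).2] at hcount
    have hD_pos : ∀ i ∈ Icc 1 (m - 1), 1 ≤ D i := fun i hi => by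
      have := hD (Set.mem_Iic.2 (Nat.zero_le m)) (hIcc i hi) (mem_Icc.1 hi).1
      omega
    exact hcount.not_ge <| card_Icc_sdiff_image_le_of_le (f := fun i => A i + 1) _
      (hD.injOn.mono hIcc) hD_pos (fun i hi => (hDA i (hIcc i hi)).trans (Nat.le_succ _)) j

/-- Billey–Jockusch–Stanley bijection: given a Dyck path of length `2n` encoded by
the partial sums `A i` of its ascent-run lengths and `D i` of its descent-run
lengths (with `m` runs), the 321-avoiding permutation `τ` defined by
`τ (D i) = A i + 1` on `𝒟 = {D 1, …, D (m-1)}` and increasing from the complement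
of `𝒟` onto `Ā = [1,n] \ (1 + 𝒜)` satisfies: `τ j > j` when `j ∈ 𝒟` and
`τ j ≤ j` when `j ∉ 𝒟`. -/
theorem bjs_above_below_diagonal (n m : ℕ) (A D : ℕ → ℕ) (τ : ℕ → ℕ)
    (hm : 1 ≤ m) (hA0 : A 0 = 0) (hD0 : D 0 = 0)
    (hAstep : ∀ i < m, A i < A (i + 1)) (hDstep : ∀ i < m, D i < D (i + 1))
    (hAm : A m = n) (hDm : D m = n)
    (hDA : ∀ i ≤ m, D i ≤ A i)
    (hτD : ∀ i, 1 ≤ i → i ≤ m - 1 → τ (D i) = A i + 1)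
    (hτmono : ∀ j k : ℕ, j ∈ Finset.Icc 1 n → k ∈ Finset.Icc 1 n →
      j ∉ (Finset.Icc 1 (m - 1)).image D → k ∉ (Finset.Icc 1 (m - 1)).image D →
      j < k → τ j < τ k)
    (hτbij : Set.BijOn τ
      ↑(Finset.Icc 1 n \ (Finset.Icc 1 (m - 1)).image D)
      ↑(Finset.Icc 1 n \ (Finset.Icc 1 (m - 1)).image (fun i => A i + 1))) :
    ∀ j ∈ Finset.Icc 1 n,
      (j ∈ (Finset.Icc 1 (m - 1)).image D → j < τ j) ∧
      (j ∉ (Finset.Icc 1 (m - 1)).image D → τ j ≤ j) :=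
  bjs_above_below_diagonal_general n m A D τ hD0 hDstep hDA hτD hτmono hτbij
end

section
/- Let γ be a Dyck path of length 2n with BJS image τ_γ, and let j ∉ D with D_{i−1} < j < D_i. For any k ∈ {1,...,m−1}: (1) if A_k − (k−1) > D_i − i then τ_γ(j) < A_k; (2) if A_k − (k−1) < D_{i−1} − (i−1) then τ_γ(j) > A_k + 1. -/
/-- For the BJS permutation `τ` of a Dyck path (encoded by ascent/descent partial
sums `A`, `D`), if `j ∉ 𝒟` with `D (i-1) < j < D i`, then for `k ∈ {1,…,m-1}`:
(1) if `A k - (k-1) > D i - i` then `τ j < A k`;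
(2) if `A k - (k-1) < D (i-1) - (i-1)` then `τ j > A k + 1`. -/
theorem bjs_value_bounds (n m : ℕ) (A D : ℕ → ℕ) (τ : ℕ → ℕ)
    (hm : 1 ≤ m) (hA0 : A 0 = 0) (hD0 : D 0 = 0)
    (hAstep : ∀ i < m, A i < A (i + 1)) (hDstep : ∀ i < m, D i < D (i + 1))
    (hAm : A m = n) (hDm : D m = n)
    (hDA : ∀ i ≤ m, D i ≤ A i)
    (hτD : ∀ i, 1 ≤ i → i ≤ m - 1 → τ (D i) = A i + 1)
    (hτmono : ∀ j k : ℕ, j ∈ Finset.Icc 1 n → k ∈ Finset.Icc 1 n →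
      j ∉ (Finset.Icc 1 (m - 1)).image D → k ∉ (Finset.Icc 1 (m - 1)).image D →
      j < k → τ j < τ k)
    (hτbij : Set.BijOn τ
      ↑(Finset.Icc 1 n \ (Finset.Icc 1 (m - 1)).image D)
      ↑(Finset.Icc 1 n \ (Finset.Icc 1 (m - 1)).image (fun i => A i + 1)))
    (i j k : ℕ)
    (hi1 : 1 ≤ i) (him : i ≤ m)
    (hj : j ∈ Finset.Icc 1 n) (hjD : j ∉ (Finset.Icc 1 (m - 1)).image D)
    (hjlo : D (i - 1) < j) (hjhi : j < D i)
    (hk1 : 1 ≤ k) (hkm : k ≤ m - 1) :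
    (((D i : ℤ) - (i : ℤ) < (A k : ℤ) - ((k : ℤ) - 1)) → τ j < A k) ∧
    (((A k : ℤ) - ((k : ℤ) - 1) < (D (i - 1) : ℤ) - ((i : ℤ) - 1)) → A k + 1 < τ j) := by
  -- strict monotonicity helpers
  have hAmono : ∀ a b, a < b → b ≤ m → A a < A b := by
    intro a b hab hbm
    induction b with
    | zero => omega
    | succ c ih =>
      rcases Nat.lt_succ_iff_lt_or_eq.mp hab with h | h
      · exact lt_trans (ih h (by omega)) (hAstep c (by omega))
      · subst h; exact hAstep a (by omega)
  have hDmono : ∀ a b, a < b → b ≤ m → D a < D b := by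
    intro a b hab hbm
    induction b with
    | zero => omega
    | succ c ih =>
      rcases Nat.lt_succ_iff_lt_or_eq.mp hab with h | h
      · exact lt_trans (ih h (by omega)) (hDstep c (by omega))
      · subst h; exact hDstep a (by omega)
  have hAmono' : ∀ a b, a ≤ b → b ≤ m → A a ≤ A b := by
    intro a b hab hbm
    rcases eq_or_lt_of_le hab with rfl | h
    · exact le_rfl
    · exact le_of_lt (hAmono a b h hbm)
  have hDmono' : ∀ a b, a ≤ b → b ≤ m → D a ≤ D b := by
    intro a b hab hbm
    rcases eq_or_lt_of_le hab with rfl | h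
    · exact le_rfl
    · exact le_of_lt (hDmono a b h hbm)
  have hAge : ∀ a, a ≤ m → a ≤ A a := by
    intro a ham
    induction a with
    | zero => omega
    | succ c ih => have := hAstep c (by omega); omega
  have hDge : ∀ a, a ≤ m → a ≤ D a := by
    intro a ham
    induction a with
    | zero => omega
    | succ c ih => have := hDstep c (by omega); omega
  set DS : Finset ℕ := (Finset.Icc 1 (m - 1)).image D with hDS
  set AS : Finset ℕ := (Finset.Icc 1 (m - 1)).image (fun l => A l + 1) with hAS
  set S : Finset ℕ := Finset.Icc 1 n \ DS with hS
  set T : Finset ℕ := Finset.Icc 1 n \ AS with hT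
  have hjS : j ∈ S := Finset.mem_sdiff.mpr ⟨hj, hjD⟩
  have hτjT : τ j ∈ T := by
    have := hτbij.mapsTo (by exact_mod_cast hjS : j ∈ (↑S : Set ℕ))
    exact_mod_cast this
  -- key rank equality
  have cardkey : (S.filter (fun s => s ≤ j)).card = (T.filter (fun t => t ≤ τ j)).card := by
    apply Finset.card_bij (fun a _ => τ a)
    · intro a ha
      rw [Finset.mem_filter] at ha ⊢
      obtain ⟨haS, haj⟩ := ha
      have haT : τ a ∈ T := by
        have := hτbij.mapsTo (by exact_mod_cast haS : a ∈ (↑S : Set ℕ))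
        exact_mod_cast this
      refine ⟨haT, ?_⟩
      rcases eq_or_lt_of_le haj with rfl | h
      · exact le_rfl
      · have haS' := Finset.mem_sdiff.mp haS
        exact le_of_lt (hτmono a j haS'.1 hj haS'.2 hjD h)
    · intro a ha b hb hab
      have haS := (Finset.mem_filter.mp ha).1
      have hbS := (Finset.mem_filter.mp hb).1
      exact hτbij.injOn (by exact_mod_cast haS) (by exact_mod_cast hbS) hab
    · intro t ht
      rw [Finset.mem_filter] at ht
      obtain ⟨htT, htj⟩ := ht
      obtain ⟨a, haS, hat⟩ := hτbij.surjOn (by exact_mod_cast htT : t ∈ (↑T : Set ℕ))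
      have haS' : a ∈ S := by exact_mod_cast haS
      refine ⟨a, Finset.mem_filter.mpr ⟨haS', ?_⟩, hat⟩
      by_contra h
      push_neg at h
      have haS'' := Finset.mem_sdiff.mp haS'
      have := hτmono j a hj haS''.1 hjD haS''.2 h
      omega
  -- cardinality of the rank set of j
  have hScard : (S.filter (fun s => s ≤ j)).card = j - (i - 1) := by
    have hjn : j ≤ n := (Finset.mem_Icc.mp hj).2
    have e1 : S.filter (fun s => s ≤ j) = Finset.Icc 1 j \ (Finset.Icc 1 (i - 1)).image D := by
      ext x
      simp only [hS, hDS, Finset.mem_filter, Finset.mem_sdiff, Finset.mem_image,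
        Finset.mem_Icc]
      constructor
      · rintro ⟨⟨⟨hx1, hxn⟩, hnot⟩, hxj⟩
        refine ⟨⟨hx1, hxj⟩, ?_⟩
        rintro ⟨l, ⟨hl1, hl2⟩, hlx⟩
        exact hnot ⟨l, ⟨hl1, by omega⟩, hlx⟩
      · rintro ⟨⟨hx1, hxj⟩, hnot⟩
        refine ⟨⟨⟨hx1, le_trans hxj hjn⟩, ?_⟩, hxj⟩
        rintro ⟨l, ⟨hl1, hl2⟩, hlx⟩
        have hli : l ≤ i - 1 := by
          by_contra hc
          push_neg at hc
          have : D i ≤ D l := hDmono' i l (by omega) (by omega)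
          omega
        exact hnot ⟨l, ⟨hl1, hli⟩, hlx⟩
    rw [e1, Finset.card_sdiff_of_subset]
    · rw [Finset.card_image_of_injOn, Nat.card_Icc, Nat.card_Icc]
      · omega
      · intro a ha b hb hab
        simp only [Finset.mem_coe, Finset.mem_Icc] at ha hb
        by_contra hne
        rcases Nat.lt_or_ge a b with h | h
        · have := hDmono a b h (by omega); omega
        · have := hDmono b a (by omega) (by omega); omega
    · intro x hx
      rw [Finset.mem_image] at hx
      obtain ⟨l, hl, hlx⟩ := hx
      rw [Finset.mem_Icc] at hl ⊢
      have h1 : 1 ≤ D l := by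
        have := hDge l (by omega); omega
      have h2 : D l ≤ D (i - 1) := hDmono' l (i - 1) hl.2 (by omega)
      omega
  -- cardinality of the set of values of T up to A k
  have hTcard : (T.filter (fun t => t ≤ A k)).card = A k - (k - 1) := by
    have hAkn : A k ≤ n := by
      have := hAmono' k m (by omega) le_rfl; omega
    have e2 : T.filter (fun t => t ≤ A k)
        = Finset.Icc 1 (A k) \ (Finset.Icc 1 (k - 1)).image (fun l => A l + 1) := by
      ext x
      simp only [hT, hAS, Finset.mem_filter, Finset.mem_sdiff, Finset.mem_image,
        Finset.mem_Icc]
      constructor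
      · rintro ⟨⟨⟨hx1, hxn⟩, hnot⟩, hxk⟩
        refine ⟨⟨hx1, hxk⟩, ?_⟩
        rintro ⟨l, ⟨hl1, hl2⟩, hlx⟩
        exact hnot ⟨l, ⟨hl1, by omega⟩, hlx⟩
      · rintro ⟨⟨hx1, hxk⟩, hnot⟩
        refine ⟨⟨⟨hx1, le_trans hxk hAkn⟩, ?_⟩, hxk⟩
        rintro ⟨l, ⟨hl1, hl2⟩, hlx⟩
        have hlk : l ≤ k - 1 := by
          by_contra hc
          push_neg at hc
          have : A k ≤ A l := hAmono' k l (by omega) (by omega)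
          omega
        exact hnot ⟨l, ⟨hl1, hlk⟩, hlx⟩
    rw [e2, Finset.card_sdiff_of_subset]
    · rw [Finset.card_image_of_injOn, Nat.card_Icc, Nat.card_Icc]
      · omega
      · intro a ha b hb hab
        simp only [Finset.mem_coe, Finset.mem_Icc] at ha hb
        simp only at hab
        by_contra hne
        rcases Nat.lt_or_ge a b with h | h
        · have := hAmono a b h (by omega); omega
        · have := hAmono b a (by omega) (by omega); omega
    · intro x hx
      rw [Finset.mem_image] at hx
      obtain ⟨l, hl, hlx⟩ := hx
      rw [Finset.mem_Icc] at hl ⊢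
      have h2 : A l < A k := hAmono l k (by omega) (by omega)
      omega
  -- useful arithmetic facts
  have hAk_ge : k ≤ A k := hAge k (by omega)
  have hDi1_ge : i - 1 ≤ D (i - 1) := hDge (i - 1) (by omega)
  constructor
  · -- part (1)
    intro hyp
    by_contra hc
    push_neg at hc
    -- A k ≤ τ j, so T ∩ [1, A k] ⊆ T ∩ [1, τ j]
    have hsub : T.filter (fun t => t ≤ A k) ⊆ T.filter (fun t => t ≤ τ j) := by
      intro x hx
      rw [Finset.mem_filter] at hx ⊢
      exact ⟨hx.1, le_trans hx.2 hc⟩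
    have hcard := Finset.card_le_card hsub
    rw [hTcard, ← cardkey, hScard] at hcard
    omega
  · -- part (2)
    intro hyp
    by_contra hc
    push_neg at hc
    -- τ j ≠ A k + 1 since τ j ∈ T
    have hne : τ j ≠ A k + 1 := by
      intro h
      have := (Finset.mem_sdiff.mp hτjT).2
      apply this
      rw [hAS, Finset.mem_image]
      exact ⟨k, Finset.mem_Icc.mpr ⟨hk1, hkm⟩, h.symm⟩
    have hle : τ j ≤ A k := by omega
    have hsub : T.filter (fun t => t ≤ τ j) ⊆ T.filter (fun t => t ≤ A k) := by
      intro x hx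
      rw [Finset.mem_filter] at hx ⊢
      exact ⟨hx.1, le_trans hx.2 hle⟩
    have hcard := Finset.card_le_card hsub
    rw [hTcard, ← cardkey, hScard] at hcard
    omega
end

section
/- Let ρ be a 123-avoiding permutation of [n], let τ(k) = n + 1 − ρ(k), and let γ be the Dyck path of length 2n corresponding to τ under the BJS bijection. Then γ has a local minimum at position n if and only if ρ has a fixed point k with k ≤ n/2; moreover, if such a fixed point k exists then k = (n − γ(n))/2. -/
/-- Let `ρ` be a 123-avoiding permutation of `[n]`, let `τ k = n + 1 - ρ k`
(a 321-avoiding permutation), and let `γ` be the Dyck path of length `2n`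
corresponding to `τ` under the BJS bijection (encoded via the ascent/descent
partial sums `A`, `D`).  Then `γ` has a local minimum at `n` iff `ρ` has a fixed
point `k ≤ n/2`; moreover any such fixed point satisfies `2k = n - γ n`. -/
theorem fixed_point_below_half_iff_local_min (n m : ℕ) (A D : ℕ → ℕ)
    (τ ρ : ℕ → ℕ) (γ : ℕ → ℤ)
    (hn : 0 < n) (hm : 1 ≤ m) (hA0 : A 0 = 0) (hD0 : D 0 = 0)
    (hAstep : ∀ i < m, A i < A (i + 1)) (hDstep : ∀ i < m, D i < D (i + 1))
    (hAm : A m = n) (hDm : D m = n)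
    (hDA : ∀ i ≤ m, D i ≤ A i)
    -- the Dyck path determined by the run lengths
    (hup : ∀ i < m, ∀ t ≤ A (i + 1) - A i,
      γ (A i + D i + t) = (A i : ℤ) - (D i : ℤ) + t)
    (hdown : ∀ i < m, ∀ t ≤ D (i + 1) - D i,
      γ (A (i + 1) + D i + t) = (A (i + 1) : ℤ) - (D i : ℤ) - t)
    -- τ is the BJS image of γ
    (hτD : ∀ i, 1 ≤ i → i ≤ m - 1 → τ (D i) = A i + 1)
    (hτmono : ∀ j k : ℕ, j ∈ Finset.Icc 1 n → k ∈ Finset.Icc 1 n →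
      j ∉ (Finset.Icc 1 (m - 1)).image D → k ∉ (Finset.Icc 1 (m - 1)).image D →
      j < k → τ j < τ k)
    (hτbij : Set.BijOn τ
      ↑(Finset.Icc 1 n \ (Finset.Icc 1 (m - 1)).image D)
      ↑(Finset.Icc 1 n \ (Finset.Icc 1 (m - 1)).image (fun i => A i + 1)))
    -- ρ is a 123-avoiding permutation of [n] with τ k = n + 1 - ρ k
    (hρbij : Set.BijOn ρ (Set.Icc 1 n) (Set.Icc 1 n))
    (hρavoid : ¬ ∃ i j k, i ∈ Set.Icc 1 n ∧ j ∈ Set.Icc 1 n ∧ k ∈ Set.Icc 1 n ∧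
      i < j ∧ j < k ∧ ρ i < ρ j ∧ ρ j < ρ k)
    (hτρ : ∀ k ∈ Set.Icc 1 n, τ k = n + 1 - ρ k) :
    ((γ (n - 1) = γ n + 1 ∧ γ (n + 1) = γ n + 1) ↔
      (∃ k ∈ Set.Icc 1 n, ρ k = k ∧ 2 * k ≤ n)) ∧
    (∀ k ∈ Set.Icc 1 n, ρ k = k → 2 * k ≤ n → (2 * k : ℤ) = (n : ℤ) - γ n) := by
  -- strict monotonicity of A and D on [0, m]
  have hAlt : ∀ j, j ≤ m → ∀ i, i < j → A i < A j := by
    intro j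
    induction j with
    | zero => intro _ i hi; omega
    | succ j ih =>
      intro hjm i hij
      rcases Nat.lt_succ_iff_lt_or_eq.mp hij with h | h
      · exact (ih (by omega) i h).trans (hAstep j (by omega))
      · subst h; exact hAstep i (by omega)
  have hAlt : ∀ i j, i < j → j ≤ m → A i < A j := fun i j h hj => hAlt j hj i h
  have hDlt : ∀ j, j ≤ m → ∀ i, i < j → D i < D j := by
    intro j
    induction j with
    | zero => intro _ i hi; omega
    | succ j ih =>
      intro hjm i hij
      rcases Nat.lt_succ_iff_lt_or_eq.mp hij with h | h
      · exact (ih (by omega) i h).trans (hDstep j (by omega))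
      · subst h; exact hDstep i (by omega)
  have hDlt : ∀ i j, i < j → j ≤ m → D i < D j := fun i j h hj => hDlt j hj i h
  have hDpos : ∀ i, 1 ≤ i → i ≤ m → 1 ≤ D i := by
    intro i h1 h2; have := hDlt 0 i h1 h2; omega
  have hDub : ∀ i, i ≤ m → D i ≤ n := by
    intro i h
    rcases eq_or_lt_of_le h with rfl | h'
    · omega
    · have := hDlt i m h' le_rfl; omega
  have hAub : ∀ i, i ≤ m → A i ≤ n := by
    intro i h
    rcases eq_or_lt_of_le h with rfl | h'
    · omega
    · have := hAlt i m h' le_rfl; omega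
  -- γ values around a valley
  have gamn : ∀ i, 1 ≤ i → i ≤ m - 1 → A i + D i = n →
      γ (n - 1) = γ n + 1 ∧ γ (n + 1) = γ n + 1 ∧ γ n = (A i : ℤ) - D i := by
    intro i h1 h2 hsum
    have him : i < m := by omega
    have hγn : γ n = (A i : ℤ) - D i := by
      have h := hup i him 0 (by omega)
      rw [show A i + D i + 0 = n from by omega] at h
      push_cast at h
      omega
    have hγn1 : γ (n + 1) = γ n + 1 := by
      have hstep := hAstep i him
      have h := hup i him 1 (by omega)
      rw [show A i + D i + 1 = n + 1 from by omega] at h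
      push_cast at h
      omega
    refine ⟨?_, hγn1, hγn⟩
    · obtain ⟨j, rfl⟩ : ∃ j, i = j + 1 := ⟨i - 1, by omega⟩
      have hjm : j < m := by omega
      have hstep := hDstep j hjm
      set t : ℕ := D (j + 1) - D j - 1 with ht
      have h := hdown j hjm t (by omega)
      rw [show A (j + 1) + D j + t = n - 1 from by omega] at h
      push_cast at h
      have hDj : (D (j+1) : ℤ) - D j - 1 = (t : ℤ) := by omega
      omega
  -- local minimum at n implies a valley at n
  have valley_of_min : (γ (n - 1) = γ n + 1 ∧ γ (n + 1) = γ n + 1) →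
      ∃ i, 1 ≤ i ∧ i ≤ m - 1 ∧ A i + D i = n := by
    rintro ⟨hl, hr⟩
    set i := Nat.findGreatest (fun i => A i + D i ≤ n) m with hidef
    have hspec : A i + D i ≤ n := by
      have := Nat.findGreatest_spec (P := fun i => A i + D i ≤ n) (Nat.zero_le m)
        (by omega : A 0 + D 0 ≤ n)
      exact this
    have him : i < m := by
      rcases eq_or_lt_of_le (Nat.findGreatest_le (P := fun i => A i + D i ≤ n) m) with h | h
      · rw [← hidef] at h; rw [h] at hspec; omega
      · rw [← hidef] at h; exact h
    have hgt : ¬ (A (i + 1) + D (i + 1) ≤ n) :=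
      Nat.findGreatest_is_greatest (P := fun i => A i + D i ≤ n) (n := m)
        (k := i + 1) (by omega) (by omega)
    by_cases hcase : A i + D i = n
    · refine ⟨i, ?_, by omega, hcase⟩
      by_contra h0
      have : i = 0 := by omega
      rw [this] at hcase; omega
    · have hlt : A i + D i < n := by omega
      by_cases hpk : n < A (i + 1) + D i
      · -- n strictly inside the ascent run
        set t : ℕ := n - A i - D i with htdef
        have e1 := hup i him (t - 1) (by omega)
        have e2 := hup i him t (by omega)
        rw [show A i + D i + (t - 1) = n - 1 from by omega] at e1
        rw [show A i + D i + t = n from by omega] at e2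
        push_cast at e1 e2
        have hcast : ((t - 1 : ℕ) : ℤ) = (t : ℤ) - 1 := by
          have : 1 ≤ t := by omega
          push_cast [this]; ring
        omega
      · -- n at the peak or inside the descent run
        set t : ℕ := n - A (i + 1) - D i with htdef
        have hA1 : A (i + 1) + D i ≤ n := by omega
        have e1 := hdown i him t (by omega)
        have e2 := hdown i him (t + 1) (by omega)
        rw [show A (i + 1) + D i + t = n from by omega] at e1
        rw [show A (i + 1) + D i + (t + 1) = n + 1 from by omega] at e2
        push_cast at e1 e2
        omega
  -- positions outside the image of D are weak deficiencies of τ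
  have no_exc : ∀ k, 1 ≤ k → k ≤ n → k ∉ (Finset.Icc 1 (m - 1)).image D → τ k ≤ k := by
    intro k hk1 hkn hkD
    by_contra hlt
    push_neg at hlt
    set imgD := (Finset.Icc 1 (m - 1)).image D with himgD
    set imgA := (Finset.Icc 1 (m - 1)).image (fun i => A i + 1) with himgA
    set FS := Finset.Icc 1 k \ imgD with hFS
    set FT := Finset.Icc 1 k \ imgA with hFT
    -- the two intersections as images of filters
    have hAeq : Finset.Icc 1 k ∩ imgA =
        ((Finset.Icc 1 (m - 1)).filter (fun i => A i + 1 ≤ k)).image (fun i => A i + 1) := by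
      ext x
      simp only [himgA, Finset.mem_inter, Finset.mem_image, Finset.mem_filter, Finset.mem_Icc]
      constructor
      · rintro ⟨⟨hx1, hxk⟩, i, ⟨hi1, hi2⟩, rfl⟩
        exact ⟨i, ⟨⟨hi1, hi2⟩, hxk⟩, rfl⟩
      · rintro ⟨i, ⟨⟨hi1, hi2⟩, hik⟩, rfl⟩
        exact ⟨⟨by omega, hik⟩, i, ⟨hi1, hi2⟩, rfl⟩
    have hDeq : Finset.Icc 1 k ∩ imgD =
        ((Finset.Icc 1 (m - 1)).filter (fun i => D i ≤ k)).image D := by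
      ext x
      simp only [himgD, Finset.mem_inter, Finset.mem_image, Finset.mem_filter, Finset.mem_Icc]
      constructor
      · rintro ⟨⟨hx1, hxk⟩, i, ⟨hi1, hi2⟩, rfl⟩
        exact ⟨i, ⟨⟨hi1, hi2⟩, hxk⟩, rfl⟩
      · rintro ⟨i, ⟨⟨hi1, hi2⟩, hik⟩, rfl⟩
        exact ⟨⟨hDpos i hi1 (by omega), hik⟩, i, ⟨hi1, hi2⟩, rfl⟩
    have hAcard : (Finset.Icc 1 k ∩ imgA).card =
        ((Finset.Icc 1 (m - 1)).filter (fun i => A i + 1 ≤ k)).card := by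
      rw [hAeq]
      apply Finset.card_image_of_injOn
      intro a ha b hb hab
      simp only [Finset.coe_filter, Set.mem_setOf_eq, Finset.mem_Icc] at ha hb
      have hab' : A a + 1 = A b + 1 := hab
      rcases lt_trichotomy a b with h | h | h
      · have := hAlt a b h (by omega); omega
      · exact h
      · have := hAlt b a h (by omega); omega
    have hDcard : (Finset.Icc 1 k ∩ imgD).card =
        ((Finset.Icc 1 (m - 1)).filter (fun i => D i ≤ k)).card := by
      rw [hDeq]
      apply Finset.card_image_of_injOn
      intro a ha b hb hab
      simp only [Finset.coe_filter, Set.mem_setOf_eq, Finset.mem_Icc] at ha hb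
      rcases lt_trichotomy a b with h | h | h
      · have := hDlt a b h (by omega); omega
      · exact h
      · have := hDlt b a h (by omega); omega
    have hsub : (Finset.Icc 1 (m - 1)).filter (fun i => A i + 1 ≤ k) ⊆
        (Finset.Icc 1 (m - 1)).filter (fun i => D i ≤ k) := by
      intro i hi
      simp only [Finset.mem_filter, Finset.mem_Icc] at hi ⊢
      refine ⟨hi.1, ?_⟩
      have := hDA i (by omega)
      omega
    have hinter : (Finset.Icc 1 k ∩ imgA).card ≤ (Finset.Icc 1 k ∩ imgD).card := by
      rw [hAcard, hDcard]
      exact Finset.card_le_card hsub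
    have hST : FS.card ≤ FT.card := by
      rw [hFS, hFT]
      have h1 := Finset.card_inter_add_card_sdiff (Finset.Icc 1 k) imgD
      have h2 := Finset.card_inter_add_card_sdiff (Finset.Icc 1 k) imgA
      omega
    -- every t ∈ FT has a preimage in FS.erase k
    have himg : FT ⊆ (FS.erase k).image τ := by
      intro t ht
      simp only [hFT, Finset.mem_sdiff, Finset.mem_Icc] at ht
      obtain ⟨⟨ht1, htk⟩, htA⟩ := ht
      have htT : t ∈ (↑(Finset.Icc 1 n \ imgA) : Set ℕ) := by
        simp only [Finset.coe_sdiff, Set.mem_diff, Finset.mem_coe, Finset.mem_Icc]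
        exact ⟨⟨ht1, le_trans htk hkn⟩, htA⟩
      obtain ⟨s, hs, hst⟩ := hτbij.surjOn htT
      simp only [Finset.coe_sdiff, Set.mem_diff, Finset.mem_coe, Finset.mem_Icc] at hs
      obtain ⟨⟨hs1, hsn⟩, hsD⟩ := hs
      have hsk : s < k := by
        by_contra hge
        push_neg at hge
        rcases eq_or_lt_of_le hge with h | h
        · rw [← h] at hst; omega
        · have := hτmono k s (by simp [Finset.mem_Icc]; omega)
            (by simp [Finset.mem_Icc]; omega) hkD hsD h
          omega
      refine Finset.mem_image.mpr ⟨s, ?_, hst⟩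
      simp only [Finset.mem_erase, hFS, Finset.mem_sdiff, Finset.mem_Icc]
      exact ⟨by omega, ⟨by omega, by omega⟩, hsD⟩
    have hkFS : k ∈ FS := by
      simp only [hFS, Finset.mem_sdiff, Finset.mem_Icc]
      exact ⟨⟨hk1, le_rfl⟩, hkD⟩
    have h1 := Finset.card_le_card himg
    have h2 := Finset.card_image_le (s := FS.erase k) (f := τ)
    have h3 := Finset.card_erase_of_mem hkFS
    have h4 : 0 < FS.card := Finset.card_pos.mpr ⟨k, hkFS⟩
    omega
  -- fixed points below n/2 give valleys
  have key : ∀ k ∈ Set.Icc 1 n, ρ k = k → 2 * k ≤ n →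
      ∃ i, 1 ≤ i ∧ i ≤ m - 1 ∧ D i = k ∧ A i + D i = n := by
    intro k hk hfix h2k
    have hk' : 1 ≤ k ∧ k ≤ n := Set.mem_Icc.mp hk
    have hτk : τ k = n + 1 - k := by rw [hτρ k hk, hfix]
    have hτgt : k < τ k := by omega
    have hkD : k ∈ (Finset.Icc 1 (m - 1)).image D := by
      by_contra h
      have := no_exc k hk'.1 hk'.2 h
      omega
    obtain ⟨i, hi, hDi⟩ := Finset.mem_image.mp hkD
    have hi' : 1 ≤ i ∧ i ≤ m - 1 := Finset.mem_Icc.mp hi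
    have hτDi := hτD i hi'.1 hi'.2
    rw [hDi] at hτDi
    exact ⟨i, hi'.1, hi'.2, hDi, by omega⟩
  constructor
  · constructor
    · intro hmin
      obtain ⟨i, hi1, hi2, hsum⟩ := valley_of_min hmin
      have hd1 : 1 ≤ D i := hDpos i hi1 (by omega)
      have hdn : D i ≤ n := by omega
      have hτk := hτD i hi1 hi2
      have hDin : D i ∈ Set.Icc 1 n := Set.mem_Icc.mpr ⟨hd1, hdn⟩
      have hρmem := hρbij.mapsTo hDin
      have hρ' : 1 ≤ ρ (D i) ∧ ρ (D i) ≤ n := Set.mem_Icc.mp hρmem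
      have hτval := hτρ (D i) hDin
      have hDA' := hDA i (by omega)
      exact ⟨D i, hDin, by omega, by omega⟩
    · rintro ⟨k, hk, hfix, h2k⟩
      obtain ⟨i, hi1, hi2, hDi, hsum⟩ := key k hk hfix h2k
      exact ⟨(gamn i hi1 hi2 hsum).1, (gamn i hi1 hi2 hsum).2.1⟩
  · intro k hk hfix h2k
    obtain ⟨i, hi1, hi2, hDi, hsum⟩ := key k hk hfix h2k
    have h3 := (gamn i hi1 hi2 hsum).2.2
    rw [h3]
    omega
end

section
/- In the correspondence of the previous context, if the Dyck path γ has a local minimum at (n, h), i.e., there exists i with A_i + D_i = n, then D_i ≤ n/2 and D_i = (n − γ(n))/2, and D_i is a fixed point of the 123-avoiding permutation ρ = (k ↦ n + 1 − τ_γ(k)). -/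
/-- In the BJS correspondence, if the Dyck path `γ` has a local minimum at `n`,
i.e. there is `i` with `A i + D i = n`, then `D i ≤ n/2`, `D i = (n - γ n)/2`,
and `D i` is a fixed point of the 123-avoiding permutation `ρ k = n + 1 - τ_γ k`. -/
theorem local_min_gives_fixed_point (n m : ℕ) (A D : ℕ → ℕ) (τ : ℕ → ℕ) (γ : ℕ → ℤ)
    (hn : 0 < n) (hm : 1 ≤ m) (hA0 : A 0 = 0) (hD0 : D 0 = 0)
    (hAstep : ∀ i < m, A i < A (i + 1)) (hDstep : ∀ i < m, D i < D (i + 1))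
    (hAm : A m = n) (hDm : D m = n)
    (hDA : ∀ i ≤ m, D i ≤ A i)
    (hup : ∀ i < m, ∀ t ≤ A (i + 1) - A i,
      γ (A i + D i + t) = (A i : ℤ) - (D i : ℤ) + t)
    (hdown : ∀ i < m, ∀ t ≤ D (i + 1) - D i,
      γ (A (i + 1) + D i + t) = (A (i + 1) : ℤ) - (D i : ℤ) - t)
    (hτD : ∀ i, 1 ≤ i → i ≤ m - 1 → τ (D i) = A i + 1)
    (hτmono : ∀ j k : ℕ, j ∈ Finset.Icc 1 n → k ∈ Finset.Icc 1 n →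
      j ∉ (Finset.Icc 1 (m - 1)).image D → k ∉ (Finset.Icc 1 (m - 1)).image D →
      j < k → τ j < τ k)
    (hτbij : Set.BijOn τ
      ↑(Finset.Icc 1 n \ (Finset.Icc 1 (m - 1)).image D)
      ↑(Finset.Icc 1 n \ (Finset.Icc 1 (m - 1)).image (fun i => A i + 1)))
    (i : ℕ) (hi1 : 1 ≤ i) (him : i ≤ m - 1) (hlocmin : A i + D i = n) :
    2 * D i ≤ n ∧ (2 * D i : ℤ) = (n : ℤ) - γ n ∧ n + 1 - τ (D i) = D i := by
  have him' : i < m := by omega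
  have hDA' : D i ≤ A i := hDA i him'.le
  have hγ : γ n = (A i : ℤ) - (D i : ℤ) := by
    have := hup i him' 0 (Nat.zero_le _)
    simpa [hlocmin] using this
  have hτ : τ (D i) = A i + 1 := hτD i hi1 him
  refine ⟨by omega, by rw [hγ]; push_cast; omega, by rw [hτ]; omega⟩
end

section
/- The number of Dyck paths of length 2n that have a local minimum at position n (i.e., a down-step into n followed by an up-step) equals the number of Dyck paths of length 2n − 2 passing through the point (n − 1, γ(n) + 1); in particular, the total number of Dyck paths of length 2n with a local minimum at n equals C_{n−1}, the (n−1)-st Catalan number, when n is even. -/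
/-- A Dyck path of length `2n`, encoded as a function `ℕ → ℤ` that is zero
outside `[0, 2n]`. -/
def IsDyckPathFn (n : ℕ) (γ : ℕ → ℤ) : Prop :=
  γ 0 = 0 ∧ γ (2 * n) = 0 ∧ (∀ x, x ≤ 2 * n → 0 ≤ γ x) ∧
    (∀ x, x < 2 * n → γ (x + 1) = γ x + 1 ∨ γ (x + 1) = γ x - 1) ∧
    (∀ x, 2 * n ≤ x → γ x = 0)

/-!
Deleting the valley at `n` (the down-step into `n` and the up-step out of it) from a Dyck path of
length `2n` keeps the path up to `n - 1` and shifts the rest two steps to the left. This is a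
bijection onto the Dyck paths of length `2n - 2` with positive height at `n - 1`, and it preserves
that height. For even `n` the height at the odd position `n - 1` is odd, hence positive, so the
count becomes that of all Dyck paths of length `2n - 2`, i.e. of Dyck words of semilength `n - 1`,
which is `C (n - 1)`.
-/

open List DyckStep

def dyckHeight (l : List DyckStep) (k : ℕ) : ℤ :=
  ((l.take k).count U : ℤ) - (l.take k).count D

@[simp]
lemma dyckHeight_zero (l : List DyckStep) : dyckHeight l 0 = 0 := by
  simp [dyckHeight]

lemma dyckHeight_succ (l : List DyckStep) {k : ℕ} (hk : k < l.length) :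
    dyckHeight l (k + 1) = dyckHeight l k + if l[k] = U then 1 else -1 := by
  rw [dyckHeight, dyckHeight, ← List.take_concat_get hk]
  rcases l[k].dichotomy with h | h <;>
    simp [h, List.concat_eq_append, List.count_append] <;> omega

lemma dyckHeight_of_length_le (l : List DyckStep) {k : ℕ} (hk : l.length ≤ k) :
    dyckHeight l k = dyckHeight l l.length := by
  rw [dyckHeight, dyckHeight, List.take_of_length_le hk, List.take_of_length_le le_rfl]

def pathSteps (m : ℕ) (γ : ℕ → ℤ) : List DyckStep :=
  (List.range (2 * m)).map fun i => if γ (i + 1) = γ i + 1 then U else D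

@[simp]
lemma length_pathSteps (m : ℕ) (γ : ℕ → ℤ) : (pathSteps m γ).length = 2 * m := by
  simp [pathSteps]

@[simp]
lemma getElem_pathSteps (m : ℕ) (γ : ℕ → ℤ) {k : ℕ} (hk : k < (pathSteps m γ).length) :
    (pathSteps m γ)[k] = if γ (k + 1) = γ k + 1 then U else D := by
  simp [pathSteps]

lemma dyckHeight_pathSteps {m : ℕ} {γ : ℕ → ℤ} (h₀ : γ 0 = 0)
    (hstep : ∀ x, x < 2 * m → γ (x + 1) = γ x + 1 ∨ γ (x + 1) = γ x - 1) :
    ∀ k ≤ 2 * m, dyckHeight (pathSteps m γ) k = γ k := by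
  intro k
  induction k with
  | zero => simp [h₀]
  | succ k ih =>
    intro hk
    rw [dyckHeight_succ _ (by simpa using hk), ih (by omega), getElem_pathSteps]
    rcases hstep k hk with h | h
    · simp [h]
    · simp [h, show γ k - 1 ≠ γ k + 1 by omega]
      ring

lemma pathSteps_dyckHeight {m : ℕ} (l : List DyckStep) (hl : l.length = 2 * m) :
    pathSteps m (dyckHeight l) = l := by
  refine List.ext_getElem (by simp [hl]) fun k hk _ => ?_
  have hkl : k < l.length := by simpa [hl] using hk
  rw [getElem_pathSteps, dyckHeight_succ l hkl]
  rcases l[k].dichotomy with h | h <;> simp [h]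

lemma isDyckPathFn_dyckHeight (p : DyckWord) :
    IsDyckPathFn p.semilength (dyckHeight p.toList) := by
  have hlen : 2 * p.semilength = p.toList.length := p.two_mul_semilength_eq_length
  have hzero : ∀ x, 2 * p.semilength ≤ x → dyckHeight p.toList x = 0 := fun x hx => by
    rw [dyckHeight_of_length_le _ (hlen ▸ hx), dyckHeight, List.take_of_length_le le_rfl,
      p.count_U_eq_count_D, sub_self]
  refine ⟨dyckHeight_zero _, hzero _ le_rfl, fun x _ => ?_, fun x hx => ?_, hzero⟩
  · have := p.count_D_le_count_U x
    rw [dyckHeight]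
    omega
  · rw [dyckHeight_succ _ (hlen ▸ hx)]
    split <;> [left; right] <;> ring

def IsDyckPathFn.toDyckWord {m : ℕ} {γ : ℕ → ℤ} (hγ : IsDyckPathFn m γ) : DyckWord where
  toList := pathSteps m γ
  count_U_eq_count_D := by
    have h := dyckHeight_pathSteps hγ.1 hγ.2.2.2.1 (2 * m) le_rfl
    rw [hγ.2.1, dyckHeight, List.take_of_length_le (by simp)] at h
    omega
  count_D_le_count_U i := by
    have h := dyckHeight_pathSteps hγ.1 hγ.2.2.2.1 (min i (2 * m)) (min_le_right _ _)
    have h' := hγ.2.2.1 _ (min_le_right i (2 * m))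
    rw [dyckHeight] at h
    rw [List.take_eq_take_min, length_pathSteps]
    omega

lemma IsDyckPathFn.semilength_toDyckWord {m : ℕ} {γ : ℕ → ℤ} (hγ : IsDyckPathFn m γ) :
    hγ.toDyckWord.semilength = m := by
  have h := hγ.toDyckWord.two_mul_semilength_eq_length
  have h' : hγ.toDyckWord.toList.length = 2 * m := length_pathSteps m γ
  omega

def dyckPathFnEquiv (m : ℕ) :
    {γ : ℕ → ℤ | IsDyckPathFn m γ} ≃ {p : DyckWord // p.semilength = m} where
  toFun γ := ⟨γ.2.toDyckWord, γ.2.semilength_toDyckWord⟩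
  invFun p := ⟨dyckHeight p.1.toList, by simpa [p.2] using isDyckPathFn_dyckHeight p.1⟩
  left_inv := by
    rintro ⟨γ, hγ⟩
    ext k
    show dyckHeight (pathSteps m γ) k = γ k
    rcases le_or_gt k (2 * m) with hk | hk
    · exact dyckHeight_pathSteps hγ.1 hγ.2.2.2.1 k hk
    · rw [dyckHeight_of_length_le _ (by simp; omega), length_pathSteps,
        dyckHeight_pathSteps hγ.1 hγ.2.2.2.1 _ le_rfl, hγ.2.1, hγ.2.2.2.2 k hk.le]
  right_inv := by
    rintro ⟨p, rfl⟩
    exact Subtype.ext (DyckWord.ext (pathSteps_dyckHeight _ p.two_mul_semilength_eq_length.symm))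

lemma card_isDyckPathFn (m : ℕ) : Nat.card {γ : ℕ → ℤ | IsDyckPathFn m γ} = catalan m := by
  rw [Nat.card_congr (dyckPathFnEquiv m), Nat.card_eq_fintype_card,
    DyckWord.card_dyckWord_semilength_eq_catalan]

lemma IsDyckPathFn.emod_two {m : ℕ} {γ : ℕ → ℤ} (hγ : IsDyckPathFn m γ) :
    ∀ k ≤ 2 * m, γ k % 2 = k % 2 := by
  intro k
  induction k with
  | zero => simp [hγ.1]
  | succ k ih =>
    intro hk
    have := ih (by omega)
    rcases hγ.2.2.2.1 k (by omega) with h | h <;> push_cast <;> omega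

lemma IsDyckPathFn.one_le_of_odd {m k : ℕ} {γ : ℕ → ℤ} (hγ : IsDyckPathFn m γ) (hk : Odd k)
    (hkm : k ≤ 2 * m) : 1 ≤ γ k := by
  have := hγ.emod_two k hkm
  have := hγ.2.2.1 k hkm
  obtain ⟨j, rfl⟩ := hk
  omega

def removeValley (m : ℕ) (γ : ℕ → ℤ) : ℕ → ℤ :=
  fun k => if k ≤ m then γ k else γ (k + 2)

def insertValley (m : ℕ) (δ : ℕ → ℤ) : ℕ → ℤ :=
  fun k => if k ≤ m then δ k else if k = m + 1 then δ m - 1 else δ (k - 2)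

lemma isDyckPathFn_removeValley {m : ℕ} {γ : ℕ → ℤ} (hγ : IsDyckPathFn (m + 1) γ)
    (hv : γ (m + 2) = γ m) : IsDyckPathFn m (removeValley m γ) := by
  obtain ⟨h₀, hend, hnonneg, hstep, hzero⟩ := hγ
  refine ⟨by simp [removeValley, h₀], ?_, fun x hx => ?_, fun x hx => ?_, fun x hx => ?_⟩
  · unfold removeValley; split_ifs
    · rw [show 2 * m = 0 by omega, h₀]
    · exact hzero _ (by omega)
  · unfold removeValley; split_ifs <;> exact hnonneg _ (by omega)
  · unfold removeValley; split_ifs <;> grind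
  · unfold removeValley; split_ifs
    · rw [show x = 0 by omega, h₀]
    · exact hzero _ (by omega)

lemma isDyckPathFn_insertValley {m : ℕ} {δ : ℕ → ℤ} (hδ : IsDyckPathFn m δ) (hpos : 1 ≤ δ m) :
    IsDyckPathFn (m + 1) (insertValley m δ) := by
  obtain ⟨h₀, hend, hnonneg, hstep, hzero⟩ := hδ
  refine ⟨by simp [insertValley, h₀], ?_, fun x hx => ?_, fun x hx => ?_, fun x hx => ?_⟩
  · rw [insertValley, if_neg (by omega), if_neg (by omega), show 2 * (m + 1) - 2 = 2 * m by omega,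
      hend]
  · unfold insertValley; split_ifs
    · exact hnonneg _ (by omega)
    · omega
    · exact hnonneg _ (by omega)
  · unfold insertValley; split_ifs <;> grind
  · rw [insertValley, if_neg (by omega), if_neg (by omega)]
    exact hzero _ (by omega)

lemma insertValley_removeValley {m : ℕ} {γ : ℕ → ℤ} (h₁ : γ m = γ (m + 1) + 1)
    (h₂ : γ (m + 2) = γ (m + 1) + 1) : insertValley m (removeValley m γ) = γ := by
  funext k
  unfold insertValley removeValley
  split_ifs <;> grind

lemma removeValley_insertValley (m : ℕ) (δ : ℕ → ℤ) :
    removeValley m (insertValley m δ) = δ := by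
  funext k
  unfold insertValley removeValley
  split_ifs <;> grind

def valleyEquiv (m : ℕ) (P : ℤ → Prop) :
    {γ : ℕ → ℤ | IsDyckPathFn (m + 1) γ ∧ γ m = γ (m + 1) + 1 ∧ γ (m + 2) = γ (m + 1) + 1 ∧
      P (γ m)} ≃ {δ : ℕ → ℤ | IsDyckPathFn m δ ∧ 1 ≤ δ m ∧ P (δ m)} where
  toFun γ := ⟨removeValley m γ, by
    obtain ⟨hγ, h₁, h₂, hP⟩ := γ.2
    have := hγ.2.2.1 (m + 1) (by omega)
    refine ⟨isDyckPathFn_removeValley hγ (by rw [h₁, h₂]), ?_⟩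
    simp only [removeValley, le_refl, if_true]
    exact ⟨by omega, hP⟩⟩
  invFun δ := ⟨insertValley m δ, by
    obtain ⟨hδ, hpos, hP⟩ := δ.2
    simpa [insertValley, hP, hpos] using isDyckPathFn_insertValley hδ hpos⟩
  left_inv γ := Subtype.ext (insertValley_removeValley γ.2.2.1 γ.2.2.2.1)
  right_inv δ := Subtype.ext (removeValley_insertValley m δ)

/-- The Dyck paths of length `2n` with a local minimum at height `h` at position
`n` are in bijection with Dyck paths of length `2n - 2` passing through
`(n - 1, h + 1)`; in particular, for even `n` the number of Dyck paths of length
`2n` with a local minimum at `n` is the Catalan number `C (n-1)`. -/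
theorem dyck_local_min_count (n : ℕ) (hn : 1 ≤ n) :
    (∀ h : ℤ, 0 ≤ h →
      Nat.card {γ : ℕ → ℤ | IsDyckPathFn n γ ∧
          γ (n - 1) = h + 1 ∧ γ n = h ∧ γ (n + 1) = h + 1}
        = Nat.card {γ : ℕ → ℤ | IsDyckPathFn (n - 1) γ ∧ γ (n - 1) = h + 1}) ∧
    (Even n →
      Nat.card {γ : ℕ → ℤ | IsDyckPathFn n γ ∧
          γ (n - 1) = γ n + 1 ∧ γ (n + 1) = γ n + 1} = catalan (n - 1)) := by
  obtain ⟨m, rfl⟩ : ∃ m, n = m + 1 := ⟨n - 1, by omega⟩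
  simp only [Nat.add_sub_cancel, add_assoc, Nat.reduceAdd]
  refine ⟨fun h hh => ?_, fun hev => ?_⟩
  · calc _ = Nat.card {γ : ℕ → ℤ | IsDyckPathFn (m + 1) γ ∧ γ m = γ (m + 1) + 1 ∧
            γ (m + 2) = γ (m + 1) + 1 ∧ γ m = h + 1} :=
          Nat.card_congr (Equiv.subtypeEquivRight fun _ =>
            and_congr_right fun _ => by constructor <;> intro <;> omega)
      _ = Nat.card {δ : ℕ → ℤ | IsDyckPathFn m δ ∧ 1 ≤ δ m ∧ δ m = h + 1} :=
          Nat.card_congr (valleyEquiv m (· = h + 1))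
      _ = _ := Nat.card_congr (Equiv.subtypeEquivRight fun _ =>
          and_congr_right fun _ => by constructor <;> intro <;> omega)
  · have hm : Odd m := by simpa [Nat.even_add_one] using hev
    calc _ = Nat.card {γ : ℕ → ℤ | IsDyckPathFn (m + 1) γ ∧ γ m = γ (m + 1) + 1 ∧
            γ (m + 2) = γ (m + 1) + 1 ∧ True} := by simp only [and_true]
      _ = Nat.card {δ : ℕ → ℤ | IsDyckPathFn m δ ∧ 1 ≤ δ m ∧ True} :=
          Nat.card_congr (valleyEquiv m fun _ => True)
      _ = Nat.card {δ : ℕ → ℤ | IsDyckPathFn m δ} :=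
          Nat.card_congr (Equiv.subtypeEquivRight fun δ => by
            simpa using fun hδ : IsDyckPathFn m δ => hδ.one_le_of_odd hm (by omega))
      _ = catalan m := card_isDyckPathFn m
end

section
/- For integers i, m with n^{0.6} < i and |m| > i^{0.6}, the binomial coefficient satisfies C(2i − m, i) ≤ (4^i / 2^m) · e^{−n^{0.1}} for all sufficiently large n. (Large-deviation bound for central binomial-type coefficients.) -/
/-!
Comparing one term of `(e^t + e^{-t})^a = ∑ C(a,k) e^{t(2k-a)}` with `2 cosh t ≤ 2 e^{t²/2}` and
optimising at `t = (2b - a)/a` gives the Hoeffding bound `C(a,b) ≤ 2^a e^{-(2b-a)²/(2a)}`.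
With `a = 2i - m`, `b = i` the deviation is `2b - a = m`, and `m² > i^{1.2}` beats
`2a n^{0.1} ≤ 2(2i + |m|) n^{0.1}` because `i^{0.2} > n^{0.12}`.
-/

open Real

namespace Nat

theorem choose_mul_exp_le_two_mul_cosh_pow (a b : ℕ) (t : ℝ) :
    (a.choose b : ℝ) * exp (t * (2 * b - a)) ≤ (2 * cosh t) ^ a := by
  rcases le_or_gt b a with hba | hab
  · have hterm : (a.choose b : ℝ) * exp (t * (2 * b - a))
        = exp t ^ b * exp (-t) ^ (a - b) * a.choose b := by
      rw [← exp_nat_mul, ← exp_nat_mul, ← exp_add, Nat.cast_sub hba]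
      ring_nf
    rw [hterm, cosh_eq, mul_div_cancel₀ _ two_ne_zero, add_pow]
    exact Finset.single_le_sum
      (f := fun k ↦ exp t ^ k * exp (-t) ^ (a - k) * (a.choose k : ℝ))
      (fun k _ ↦ by positivity) (Finset.mem_range_succ_iff.2 hba)
  · rw [Nat.choose_eq_zero_of_lt hab, Nat.cast_zero, zero_mul]
    exact pow_nonneg (mul_nonneg zero_le_two (cosh_pos t).le) a

theorem choose_le_two_pow_mul_exp (a b : ℕ) (t : ℝ) :
    (a.choose b : ℝ) ≤ 2 ^ a * exp (a * t ^ 2 / 2 - t * (2 * b - a)) := by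
  rw [exp_sub, mul_div_assoc', le_div_iff₀ (exp_pos _)]
  calc (a.choose b : ℝ) * exp (t * (2 * b - a)) ≤ (2 * cosh t) ^ a :=
        choose_mul_exp_le_two_mul_cosh_pow a b t
    _ ≤ (2 * exp (t ^ 2 / 2)) ^ a := by gcongr; exact cosh_le_exp_half_sq t
    _ = 2 ^ a * exp (a * t ^ 2 / 2) := by rw [mul_pow, ← exp_nat_mul, mul_div_assoc]

theorem choose_le_two_pow_mul_exp_neg_sq_div (a b : ℕ) :
    (a.choose b : ℝ) ≤ 2 ^ a * exp (-(2 * b - a) ^ 2 / (2 * a)) := by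
  rcases Nat.eq_zero_or_pos a with rfl | ha
  -- At `a = 0` the exponent is `x / 0 = 0`, and `C(0, b) ≤ 1`.
  · rcases b with _ | b <;> simp
  · convert choose_le_two_pow_mul_exp a b ((2 * b - a) / a) using 3
    field_simp
    ring

end Nat

theorem six_mul_rpow_tenth_le_rpow_fifth {n i : ℝ} (hn : 6 ^ 50 ≤ n)
    (hi : n ^ (0.6 : ℝ) ≤ i) :
    6 * n ^ (0.1 : ℝ) ≤ i ^ (0.2 : ℝ) := by
  have hn0 : 0 < n := lt_of_lt_of_le (by positivity) hn
  have hsix : 6 ≤ n ^ (0.02 : ℝ) := by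
    calc (6 : ℝ) = ((6 : ℝ) ^ 50) ^ (0.02 : ℝ) := by
          rw [← rpow_natCast, ← rpow_mul (by norm_num)]; norm_num
      _ ≤ n ^ (0.02 : ℝ) := by gcongr
  calc 6 * n ^ (0.1 : ℝ) ≤ n ^ (0.02 : ℝ) * n ^ (0.1 : ℝ) := by gcongr
    _ = (n ^ (0.6 : ℝ)) ^ (0.2 : ℝ) := by
          rw [← rpow_add hn0, ← rpow_mul hn0.le]; norm_num
    _ ≤ i ^ (0.2 : ℝ) := by gcongr

theorem two_mul_add_abs_mul_le_sq {x i m : ℝ} (hx : 0 ≤ x) (hi : 1 ≤ i)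
    (hxi : 6 * x ≤ i ^ (0.2 : ℝ)) (hm : i ^ (0.6 : ℝ) < |m|) :
    2 * (2 * i + |m|) * x ≤ m ^ 2 := by
  have hi0 : 0 ≤ i := zero_le_one.trans hi
  have hsq : i * i ^ (0.2 : ℝ) ≤ m ^ 2 := by
    calc i * i ^ (0.2 : ℝ) = (i ^ (0.6 : ℝ)) ^ 2 := by
          rw [← rpow_natCast, ← rpow_mul hi0, mul_comm, ← rpow_add_one (by positivity)]
          norm_num
      _ ≤ |m| ^ 2 := by gcongr
      _ = m ^ 2 := sq_abs m
  have hfifth : i ^ (0.2 : ℝ) ≤ i := by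
    simpa using rpow_le_rpow_of_exponent_le hi (show (0.2 : ℝ) ≤ 1 by norm_num)
  rcases le_total |m| i with hmi | hmi
  · nlinarith
  · nlinarith [abs_nonneg m, sq_abs m]

/-- Large-deviation bound for central binomial-type coefficients: for all
sufficiently large `n`, if `n^{0.6} < i` and `|m| > i^{0.6}` then
`C(2i - m, i) ≤ (4^i / 2^m) · e^{-n^{0.1}}`. -/
theorem binomial_large_deviation :
    ∃ N : ℕ, ∀ n : ℕ, N ≤ n → ∀ i : ℕ, ∀ m : ℤ,
      (n : ℝ) ^ (0.6 : ℝ) < (i : ℝ) →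
      (i : ℝ) ^ (0.6 : ℝ) < |(m : ℝ)| →
      ((Nat.choose (2 * (i : ℤ) - m).toNat i : ℕ) : ℝ)
        ≤ (4 : ℝ) ^ i / (2 : ℝ) ^ m * Real.exp (-(n : ℝ) ^ (0.1 : ℝ)) := by
  refine ⟨6 ^ 50, fun n hn i m hni him ↦ ?_⟩
  have hi : 1 ≤ i := by
    exact_mod_cast (rpow_nonneg n.cast_nonneg _).trans_lt hni
  have hx : 0 ≤ (n : ℝ) ^ (0.1 : ℝ) := rpow_nonneg n.cast_nonneg _
  have hdev := two_mul_add_abs_mul_le_sq hx (by exact_mod_cast hi)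
    (six_mul_rpow_tenth_le_rpow_fifth (by exact_mod_cast hn) hni.le) him
  set a := (2 * (i : ℤ) - m).toNat with ha
  rcases lt_or_ge a i with hai | hia
  · rw [Nat.choose_eq_zero_of_lt hai, Nat.cast_zero]
    positivity
  have haZ : (a : ℤ) = 2 * i - m := Int.toNat_of_nonneg (by omega)
  have haR : (a : ℝ) = 2 * i - m := by exact_mod_cast haZ
  have hpow : (2 : ℝ) ^ a = 4 ^ i / 2 ^ m := by
    rw [← zpow_natCast, haZ, zpow_sub₀ two_ne_zero, zpow_mul, zpow_natCast]
    norm_num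
  have hexp : -(2 * i - a : ℝ) ^ 2 / (2 * a) ≤ -(n : ℝ) ^ (0.1 : ℝ) := by
    rw [neg_div, neg_le_neg_iff, le_div_iff₀ (mul_pos two_pos (Nat.cast_pos.2 (by omega))),
      show (2 * i - a : ℝ) = m by linarith]
    nlinarith [le_abs_self (m : ℝ), neg_abs_le (m : ℝ)]
  calc ((a.choose i : ℕ) : ℝ) ≤ 2 ^ a * exp (-(2 * i - a) ^ 2 / (2 * a)) :=
        Nat.choose_le_two_pow_mul_exp_neg_sq_div a i
    _ ≤ 2 ^ a * exp (-(n : ℝ) ^ (0.1 : ℝ)) := by gcongr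
    _ = 4 ^ i / 2 ^ m * exp (-(n : ℝ) ^ (0.1 : ℝ)) := by rw [hpow]
end

section
/- Let X_1, X_2, ... be i.i.d. real random variables with mean 0 and finite variance σ², and let S_k = X_1 + ... + X_k. Then for all x and n, P(max_{1 ≤ k ≤ n} S_k ≥ x) ≤ 2 P(S_n ≥ x − √(2nσ²)). -/
/-!
Split the event `{max_{k ≤ n} S_k ≥ x}` according to the first index `k` at which `S_k ≥ x`.
The first-passage event at `k` depends only on `X_1, …, X_k`, hence is independent of the tail
`S_n - S_k`, whose variance is at most `nσ²`; by Chebyshev's inequality the tail drops below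
`-√(2nσ²)` with probability at most `1/2`. So at least half of each first-passage event lies in
`{S_n ≥ x - √(2nσ²)}`, and summing over the disjoint first-passage events gives the factor `2`.
-/

open MeasureTheory ProbabilityTheory

theorem measurable_iSup_comap {Ω ι β : Type*} [MeasurableSpace β] (X : ι → Ω → β) {s : Set ι}
    {i : ι} (hi : i ∈ s) : Measurable[⨆ j ∈ s, MeasurableSpace.comap (X j) ‹_›] (X i) :=
  Measurable.of_comap_le (le_iSup₂ (f := fun j (_ : j ∈ s) => MeasurableSpace.comap (X j) _) i hi)

section Measure

variable {Ω ι : Type*} [MeasurableSpace Ω] {μ : Measure Ω}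

theorem measure_le_two_mul_measure_diff [IsFiniteMeasure μ] {A B : Set Ω}
    (hB : MeasurableSet B) (hAB : μ (A ∩ B) = μ A * μ B) (hB_le : μ B ≤ 1 / 2) :
    μ A ≤ 2 * μ (A \ B) := by
  have h2B : 2 * μ B ≤ 1 := by
    calc 2 * μ B ≤ 2 * (1 / 2) := by gcongr
      _ = 1 := ENNReal.mul_div_cancel two_ne_zero ENNReal.ofNat_ne_top
  refine ENNReal.le_of_add_le_add_left (measure_ne_top μ A) ?_
  calc μ A + μ A = 2 * (μ (A ∩ B) + μ (A \ B)) := by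
        rw [measure_inter_add_sdiff _ hB, two_mul]
    _ = μ A * (2 * μ B) + 2 * μ (A \ B) := by rw [hAB]; ring
    _ ≤ μ A * 1 + 2 * μ (A \ B) := by gcongr
    _ = μ A + 2 * μ (A \ B) := by rw [mul_one]

theorem measure_biUnion_le_mul_of_forall_le_mul {s : Finset ι} {A D : ι → Set Ω} {G : Set Ω}
    {C : ENNReal} (hA : (s : Set ι).PairwiseDisjoint A) (hDA : ∀ i ∈ s, D i ⊆ A i)
    (hD : ∀ i ∈ s, MeasurableSet (D i)) (hDG : ∀ i ∈ s, D i ⊆ G)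
    (hle : ∀ i ∈ s, μ (A i) ≤ C * μ (D i)) :
    μ (⋃ i ∈ s, A i) ≤ C * μ G := by
  have hDdisj : (s : Set ι).PairwiseDisjoint D := fun i hi j hj hij =>
    (hA hi hj hij).mono (hDA i hi) (hDA j hj)
  calc μ (⋃ i ∈ s, A i) ≤ ∑ i ∈ s, μ (A i) := measure_biUnion_finset_le s A
    _ ≤ ∑ i ∈ s, C * μ (D i) := Finset.sum_le_sum hle
    _ = C * μ (⋃ i ∈ s, D i) := by rw [measure_biUnion_finset hDdisj hD, Finset.mul_sum]
    _ ≤ C * μ G := by gcongr; exact Set.iUnion₂_subset hDG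

end Measure

namespace ProbabilityTheory

variable {Ω ι : Type*} [MeasurableSpace Ω] {μ : Measure Ω}

theorem measure_lt_neg_le_half [IsFiniteMeasure μ] {Y : Ω → ℝ} (hY : MemLp Y 2 μ)
    (hmean : μ[Y] = 0) {c : ℝ} (hc0 : 0 ≤ c) (hc : 2 * variance Y μ ≤ c ^ 2) :
    μ {ω | Y ω < -c} ≤ 1 / 2 := by
  rcases hc0.eq_or_lt with rfl | hc_pos
  · have hvar : variance Y μ = 0 := by nlinarith [variance_nonneg Y μ]
    have hnull : μ {ω | Y ω < -0} = 0 := by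
      refine measure_eq_zero_iff_ae_notMem.2 ?_
      filter_upwards [ae_eq_integral_of_variance_eq_zero hY hvar] with ω hω
      simp [hω, hmean]
    rw [hnull]
    exact zero_le
  · have hsub : {ω | Y ω < -c} ⊆ {ω | c ≤ |Y ω - μ[Y]|} := fun ω hω => by
      simp only [Set.mem_ofPred_eq, hmean, sub_zero] at hω ⊢
      exact le_abs.2 (Or.inr (by linarith))
    have hratio : variance Y μ / c ^ 2 ≤ 1 / 2 := by
      rw [div_le_iff₀ (by positivity)]; linarith
    calc μ {ω | Y ω < -c} ≤ ENNReal.ofReal (variance Y μ / c ^ 2) :=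
          (measure_mono hsub).trans (meas_ge_le_variance_div_sq hY hc_pos)
      _ ≤ ENNReal.ofReal (1 / 2) := ENNReal.ofReal_le_ofReal hratio
      _ = 1 / 2 := by rw [ENNReal.ofReal_div_of_pos two_pos]; simp

theorem measure_sum_lt_neg_le_half [IsFiniteMeasure μ] {X : ι → Ω → ℝ} {s : Finset ι}
    (hL2 : ∀ i ∈ s, MemLp (X i) 2 μ) (hmean : ∀ i ∈ s, μ[X i] = 0)
    (hindep : Set.Pairwise ↑s fun i j => IndepFun (X i) (X j) μ) {v c : ℝ}
    (hvar : ∀ i ∈ s, variance (X i) μ ≤ v) (hc0 : 0 ≤ c) (hc : 2 * (s.card * v) ≤ c ^ 2) :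
    μ {ω | ∑ i ∈ s, X i ω < -c} ≤ 1 / 2 := by
  have hvar_sum : variance (fun ω => ∑ i ∈ s, X i ω) μ ≤ s.card * v := by
    rw [← Finset.sum_fn, IndepFun.variance_sum hL2 hindep, ← nsmul_eq_mul]
    exact Finset.sum_le_card_nsmul s _ v hvar
  have hmean_sum : ∫ ω, ∑ i ∈ s, X i ω ∂μ = 0 := by
    rw [integral_finsetSum s fun i hi => (hL2 i hi).integrable one_le_two]
    exact Finset.sum_eq_zero hmean
  exact measure_lt_neg_le_half (memLp_finsetSum s hL2) hmean_sum hc0 (by linarith)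

theorem iIndepFun.measure_inter_eq_mul {β : Type*} [mβ : MeasurableSpace β] {X : ι → Ω → β}
    (hX : iIndepFun X μ) (hmeas : ∀ i, Measurable (X i)) {s t : Set ι} (hst : Disjoint s t)
    {A B : Set Ω} (hA : MeasurableSet[⨆ i ∈ s, mβ.comap (X i)] A)
    (hB : MeasurableSet[⨆ i ∈ t, mβ.comap (X i)] B) :
    μ (A ∩ B) = μ A * μ B :=
  (Indep_iff _ _ μ).1 (indep_iSup_of_disjoint (fun i => (hmeas i).comap_le)
    ((iIndepFun_iff_iIndep _ X μ).1 hX) hst) A B hA hB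

end ProbabilityTheory

section FirstPassage

variable {Ω : Type*} (S : ℕ → Ω → ℝ) (x : ℝ)

def firstPassage (k : ℕ) : Set Ω :=
  {ω | (∀ j ∈ Finset.Ico 1 k, S j ω < x) ∧ x ≤ S k ω}

theorem pairwiseDisjoint_firstPassage : (Set.Ici 1).PairwiseDisjoint (firstPassage S x) := by
  suffices ∀ k l, 1 ≤ k → k < l → Disjoint (firstPassage S x k) (firstPassage S x l) by
    intro k hk l hl hkl
    rcases hkl.lt_or_gt with h | h
    · exact this k l hk h
    · exact (this l k hl h).symm
  intro k l hk hkl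
  refine Set.disjoint_left.2 fun ω hωk hωl => ?_
  exact (hωl.1 k (Finset.mem_Ico.2 ⟨hk, hkl⟩)).not_ge hωk.2

theorem setOf_le_sup'_eq_biUnion_firstPassage {n : ℕ} (hn : (Finset.Icc 1 n).Nonempty) :
    {ω | x ≤ (Finset.Icc 1 n).sup' hn fun k => S k ω} =
      ⋃ k ∈ Finset.Icc 1 n, firstPassage S x k := by
  ext ω
  simp only [Set.mem_ofPred_eq, Finset.le_sup'_iff, Set.mem_iUnion, exists_prop]
  constructor
  · intro hex
    classical
    obtain ⟨hk, hxk⟩ := Nat.find_spec hex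
    refine ⟨Nat.find hex, hk, fun j hj => ?_, hxk⟩
    have hj' := Finset.mem_Ico.1 hj
    have hjn : j ∈ Finset.Icc 1 n := Finset.mem_Icc.2 ⟨hj'.1, by grind⟩
    exact not_le.1 fun hxj => Nat.find_min hex hj'.2 ⟨hjn, hxj⟩
  · rintro ⟨k, hk, -, hxk⟩
    exact ⟨k, hk, hxk⟩

theorem measurableSet_firstPassage {m : MeasurableSpace Ω} {k : ℕ}
    (hS : ∀ j ≤ k, Measurable[m] (S j)) : MeasurableSet[m] (firstPassage S x k) := by
  have hpast : MeasurableSet[m] {ω | ∀ j ∈ Finset.Ico 1 k, S j ω < x} := by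
    simp only [Set.ofPred_forall]
    exact .biInter (Finset.countable_toSet _) fun j hj =>
      measurableSet_lt (hS j (Finset.mem_Ico.1 hj).2.le) measurable_const
  exact hpast.inter (measurableSet_le measurable_const (hS k le_rfl))

end FirstPassage

theorem sum_Icc_one_add_sum_Ioc {M : Type*} [AddCommMonoid M] (f : ℕ → M) {k n : ℕ}
    (hkn : k ≤ n) : ∑ i ∈ Finset.Icc 1 k, f i + ∑ i ∈ Finset.Ioc k n, f i =
      ∑ i ∈ Finset.Icc 1 n, f i := by
  have hIcc (m : ℕ) : Finset.Icc 1 m = Finset.Ioc 0 m := Finset.Icc_add_one_left_eq_Ioc 0 m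
  simp only [hIcc]
  exact Finset.sum_Ioc_consecutive f k.zero_le hkn

theorem ProbabilityTheory.iIndepFun.measure_firstPassage_inter_eq_mul {Ω : Type*}
    [MeasurableSpace Ω] {μ : Measure Ω} {X : ℕ → Ω → ℝ} (hX : iIndepFun X μ)
    (hmeas : ∀ i, Measurable (X i)) (x y : ℝ) (k n : ℕ) :
    μ (firstPassage (fun j ω => ∑ i ∈ Finset.Icc 1 j, X i ω) x k ∩
        {ω | ∑ i ∈ Finset.Ioc k n, X i ω < y}) =
      μ (firstPassage (fun j ω => ∑ i ∈ Finset.Icc 1 j, X i ω) x k) *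
        μ {ω | ∑ i ∈ Finset.Ioc k n, X i ω < y} :=
  hX.measure_inter_eq_mul hmeas (Set.Iic_disjoint_Ioi le_rfl)
    (measurableSet_firstPassage _ x fun _ hj => Finset.measurable_sum _ fun _ hi =>
      measurable_iSup_comap X (Set.mem_Iic.2 ((Finset.mem_Icc.1 hi).2.trans hj)))
    (measurableSet_lt (Finset.measurable_sum _ fun _ hi =>
      measurable_iSup_comap X (Set.mem_Ioi.2 (Finset.mem_Ioc.1 hi).1)) measurable_const)

/-- Lévy/Petrov maximal inequality: if `X₁, X₂, …` are i.i.d. centered real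
random variables with finite variance `σ²` and `S_k = X₁ + ⋯ + X_k`, then
`P(max_{1 ≤ k ≤ n} S_k ≥ x) ≤ 2 P(S_n ≥ x - √(2 n σ²))`. -/
theorem levy_maximal_inequality {Ω : Type*} [MeasurableSpace Ω]
    (μ : Measure Ω) [IsProbabilityMeasure μ]
    (X : ℕ → Ω → ℝ) (hmeas : ∀ i, Measurable (X i))
    (hindep : iIndepFun X μ)
    (hident : ∀ i, IdentDistrib (X i) (X 1) μ μ)
    (hmean : ∫ ω, X 1 ω ∂μ = 0)
    (hL2 : MemLp (X 1) 2 μ)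
    (n : ℕ) (hn : 0 < n) (x : ℝ) :
    μ {ω | x ≤ (Finset.Icc 1 n).sup' (Finset.nonempty_Icc.mpr hn)
          (fun k => ∑ i ∈ Finset.Icc 1 k, X i ω)}
      ≤ 2 * μ {ω | x - Real.sqrt (2 * n * variance (X 1) μ)
          ≤ ∑ i ∈ Finset.Icc 1 n, X i ω} := by
  have hσ2 : 0 ≤ variance (X 1) μ := variance_nonneg _ _
  set c := √(2 * n * variance (X 1) μ)
  set S : ℕ → Ω → ℝ := fun k ω => ∑ i ∈ Finset.Icc 1 k, X i ω
  set B : ℕ → Set Ω := fun k => {ω | ∑ i ∈ Finset.Ioc k n, X i ω < -c}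
  have hB : ∀ k, MeasurableSet (B k) := fun k =>
    measurableSet_lt (Finset.measurable_sum _ fun i _ => hmeas i) measurable_const
  have hB_half : ∀ k, μ (B k) ≤ 1 / 2 := fun k => by
    refine measure_sum_lt_neg_le_half (fun i _ => (hident i).symm.memLp_snd hL2)
      (fun i _ => (hident i).integral_eq.trans hmean) (fun i _ j _ hij => hindep.indepFun hij)
      (fun i _ => (hident i).variance_eq.le) (Real.sqrt_nonneg _) ?_
    rw [Real.sq_sqrt (by positivity)]
    have hcard : ((Finset.Ioc k n).card : ℝ) ≤ n := by simp
    nlinarith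
  have hgood : ∀ k ∈ Finset.Icc 1 n, firstPassage S x k \ B k ⊆ {ω | x - c ≤ S n ω} := by
    rintro k hk ω ⟨⟨-, hxk⟩, hω⟩
    have hsplit := sum_Icc_one_add_sum_Ioc (X · ω) (Finset.mem_Icc.1 hk).2
    simp only [B, Set.mem_ofPred_eq, not_lt] at hω
    simp only [S, Set.mem_ofPred_eq]
    linarith
  rw [setOf_le_sup'_eq_biUnion_firstPassage S]
  exact measure_biUnion_le_mul_of_forall_le_mul
    ((pairwiseDisjoint_firstPassage S x).subset fun k hk => (Finset.mem_Icc.1 hk).1)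
    (fun k _ => Set.sdiff_subset)
    (fun k _ => (measurableSet_firstPassage S x fun j _ =>
      Finset.measurable_sum _ fun i _ => hmeas i).diff (hB k)) hgood
    (fun k _ => measure_le_two_mul_measure_diff (hB k)
      (hindep.measure_firstPassage_inter_eq_mul hmeas x _ k n) (hB_half k))
end

section
/- Let X_1, X_2, ... be i.i.d. with E X_1 = 0 and E e^{t|X_1|} < ∞ for some t > 0, and S_n = X_1 + ... + X_n. Then there exist constants g, T > 0, independent of n, such that P(S_n ≥ x) ≤ exp(−x²/(2gn)) for 0 ≤ x ≤ ngT, and P(S_n ≥ x) ≤ exp(−Tx/2) for x ≥ ngT. -/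
/-!
Taylor's bound `e^y ≤ 1 + y + y² e^{|y|}` and `E X₁ = 0` give
`E e^{tX₁} ≤ 1 + t² E[X₁² e^{T|X₁|}] ≤ e^{g t²/2}` for `|t| ≤ T`, where `E e^{2T|X₁|} < ∞`.
By independence the Chernoff bound then reads `P(S_n ≥ x) ≤ exp(-t x + n g t²/2)` for
`0 ≤ t ≤ T`; taking the minimiser `t = x/(ng)` when it lies in `[0, T]` gives the Gaussian
regime, and `t = T` gives the exponential regime.
-/

open MeasureTheory ProbabilityTheory Real Finset

namespace Real

lemma exp_le_one_add_mul_exp (z : ℝ) : exp z ≤ 1 + z * exp z := by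
  have h := mul_le_mul_of_nonneg_right (add_one_le_exp (-z)) (exp_pos z).le
  rw [← exp_add, neg_add_cancel, exp_zero] at h
  linarith

lemma exp_le_one_add_add_sq_mul_exp_abs (y : ℝ) : exp y ≤ 1 + y + y ^ 2 * exp |y| := by
  have hy : y * exp y ≤ y + y ^ 2 * exp |y| := by
    rcases le_or_gt 0 y with hy | hy
    · rw [abs_of_nonneg hy]
      nlinarith [mul_le_mul_of_nonneg_left (exp_le_one_add_mul_exp y) hy]
    · have := mul_le_mul_of_nonpos_left (add_one_le_exp y) hy.le
      nlinarith [one_le_exp (abs_nonneg y), sq_nonneg y]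
  linarith [exp_le_one_add_mul_exp y]

lemma sq_mul_exp_mul_abs_le (y : ℝ) {T : ℝ} (hT : 0 < T) :
    y ^ 2 * exp (T * |y|) ≤ 2 / T ^ 2 * exp (2 * T * |y|) := by
  have h := pow_div_factorial_le_exp _ (mul_nonneg hT.le (abs_nonneg y)) 2
  rw [mul_pow, sq_abs, Nat.factorial_two, Nat.cast_two] at h
  have hy : y ^ 2 ≤ 2 / T ^ 2 * exp (T * |y|) := by
    rw [div_mul_eq_mul_div, le_div_iff₀ (by positivity)]
    linarith
  calc y ^ 2 * exp (T * |y|) ≤ 2 / T ^ 2 * exp (T * |y|) * exp (T * |y|) := by gcongr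
    _ = 2 / T ^ 2 * exp (2 * T * |y|) := by rw [mul_assoc, ← exp_add]; ring_nf

end Real

/-- The value of the Chernoff exponent `t ↦ -t x + n g t²/2` at its minimiser `t = x/(ng)`;
for `ng = 0` both sides vanish because of the junk value of division by zero. -/
lemma chernoff_exponent_at_minimiser (x g n : ℝ) :
    -(x / (n * g)) * x + n * (g * (x / (n * g)) ^ 2 / 2) = -(x ^ 2) / (2 * g * n) := by
  rcases eq_or_ne (n * g) 0 with h | h
  · rcases mul_eq_zero.1 h with rfl | rfl <;> simp
  · have hn : n ≠ 0 := left_ne_zero_of_mul h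
    have hg : g ≠ 0 := right_ne_zero_of_mul h
    field_simp
    ring

namespace ProbabilityTheory

variable {Ω : Type*} [MeasurableSpace Ω] {μ : Measure Ω}

section ExponentialMoment

variable {Y : Ω → ℝ} {T u : ℝ}

lemma integrable_exp_mul_of_integrable_exp_mul_abs (hY : AEMeasurable Y μ)
    (h : Integrable (fun ω => exp (u * |Y ω|)) μ) {t : ℝ} (ht : |t| ≤ u) :
    Integrable (fun ω => exp (t * Y ω)) μ := by
  refine h.mono (hY.const_mul t).exp.aestronglyMeasurable (ae_of_all _ fun ω => ?_)
  rw [norm_of_nonneg (exp_pos _).le, norm_of_nonneg (exp_pos _).le, exp_le_exp]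
  calc t * Y ω ≤ |t| * |Y ω| := by rw [← abs_mul]; exact le_abs_self _
    _ ≤ u * |Y ω| := by gcongr

lemma integrable_of_integrable_exp_mul_abs (hY : AEMeasurable Y μ)
    (h : Integrable (fun ω => exp (u * |Y ω|)) μ) (hu : 0 < u) : Integrable Y μ := by
  have hint : ∀ t, |t| ≤ u → Integrable (fun ω => exp (t * Y ω)) μ :=
    fun t ht => integrable_exp_mul_of_integrable_exp_mul_abs hY h ht
  simpa using integrable_pow_of_integrable_exp_mul hu.ne' (hint u (abs_of_pos hu).le)
    (hint (-u) (by rw [abs_neg, abs_of_pos hu])) 1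

lemma integrable_sq_mul_exp_mul_abs (hY : AEMeasurable Y μ)
    (h : Integrable (fun ω => exp (2 * T * |Y ω|)) μ) (hT : 0 < T) :
    Integrable (fun ω => Y ω ^ 2 * exp (T * |Y ω|)) μ := by
  refine (h.const_mul (2 / T ^ 2)).mono (by fun_prop) (ae_of_all _ fun ω => ?_)
  rw [norm_of_nonneg (by positivity), norm_of_nonneg (by positivity)]
  exact sq_mul_exp_mul_abs_le (Y ω) hT

lemma mgf_le_one_add_sq_mul_integral [IsProbabilityMeasure μ] (hY : Integrable Y μ)
    (hmean : μ[Y] = 0) (hquad : Integrable (fun ω => Y ω ^ 2 * exp (T * |Y ω|)) μ)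
    {t : ℝ} (ht : |t| ≤ T) :
    mgf Y μ t ≤ 1 + t ^ 2 * μ[fun ω => Y ω ^ 2 * exp (T * |Y ω|)] := by
  have hpt : ∀ ω, exp (t * Y ω) ≤ 1 + t * Y ω + t ^ 2 * (Y ω ^ 2 * exp (T * |Y ω|)) :=
    fun ω => calc
      exp (t * Y ω) ≤ 1 + t * Y ω + (t * Y ω) ^ 2 * exp |t * Y ω| :=
        exp_le_one_add_add_sq_mul_exp_abs _
      _ ≤ 1 + t * Y ω + (t * Y ω) ^ 2 * exp (T * |Y ω|) := by
        rw [abs_mul]; gcongr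
      _ = 1 + t * Y ω + t ^ 2 * (Y ω ^ 2 * exp (T * |Y ω|)) := by ring
  have hlin : Integrable (fun ω => 1 + t * Y ω) μ := (integrable_const 1).add (hY.const_mul t)
  calc mgf Y μ t ≤ ∫ ω, (1 + t * Y ω + t ^ 2 * (Y ω ^ 2 * exp (T * |Y ω|))) ∂μ :=
        integral_mono_of_nonneg (ae_of_all _ fun _ => (exp_pos _).le)
          (hlin.add (hquad.const_mul _)) (ae_of_all _ hpt)
    _ = 1 + t ^ 2 * μ[fun ω => Y ω ^ 2 * exp (T * |Y ω|)] := by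
        rw [integral_add hlin (hquad.const_mul _), integral_add (integrable_const 1)
          (hY.const_mul t), integral_const_mul, integral_const_mul, hmean]
        simp

end ExponentialMoment

lemma measure_sum_ge_le_of_mgf_le {ι : Type*} {X : ι → Ω → ℝ} (hmeas : ∀ i, Measurable (X i))
    (hindep : iIndepFun X μ) (s : Finset ι) {t c : ℝ} (ht : 0 ≤ t)
    (hint : ∀ i ∈ s, Integrable (fun ω => exp (t * X i ω)) μ)
    (hmgf : ∀ i ∈ s, mgf (X i) μ t ≤ exp c) (x : ℝ) :
    μ {ω | x ≤ ∑ i ∈ s, X i ω} ≤ ENNReal.ofReal (exp (-t * x + #s * c)) := by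
  have := hindep.isProbabilityMeasure
  have hchernoff := measure_ge_le_exp_mul_mgf x ht (hindep.integrable_exp_mul_sum hmeas hint)
  simp only [Finset.sum_apply, hindep.mgf_sum hmeas] at hchernoff
  rw [ENNReal.le_ofReal_iff_toReal_le (measure_ne_top μ _) (exp_pos _).le]
  calc μ.real {ω | x ≤ ∑ i ∈ s, X i ω} ≤ exp (-t * x) * ∏ i ∈ s, mgf (X i) μ t := hchernoff
    _ ≤ exp (-t * x) * ∏ _i ∈ s, exp c := by
        gcongr
        exacts [fun _ _ => mgf_nonneg, hmgf _ ‹_›]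
    _ = exp (-t * x + #s * c) := by rw [prod_const, ← exp_nat_mul, ← exp_add]

end ProbabilityTheory

/-- Petrov/Bernstein-type moderate deviation inequality: if `X₁, X₂, …` are
i.i.d. centered random variables with a finite exponential moment, then there
are constants `g, T > 0` (independent of `n`) with
`P(S_n ≥ x) ≤ exp(-x²/(2gn))` for `0 ≤ x ≤ ngT` and
`P(S_n ≥ x) ≤ exp(-Tx/2)` for `x ≥ ngT`. -/
theorem petrov_moderate_deviations {Ω : Type*} [MeasurableSpace Ω]
    (μ : Measure Ω) [IsProbabilityMeasure μ]
    (X : ℕ → Ω → ℝ) (hmeas : ∀ i, Measurable (X i))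
    (hindep : iIndepFun X μ)
    (hident : ∀ i, IdentDistrib (X i) (X 1) μ μ)
    (hmean : ∫ ω, X 1 ω ∂μ = 0)
    (hexp : ∃ t : ℝ, 0 < t ∧ Integrable (fun ω => Real.exp (t * |X 1 ω|)) μ) :
    ∃ g : ℝ, 0 < g ∧ ∃ T : ℝ, 0 < T ∧ ∀ n : ℕ, ∀ x : ℝ,
      (0 ≤ x → x ≤ n * g * T →
        μ {ω | x ≤ ∑ i ∈ Finset.Icc 1 n, X i ω}
          ≤ ENNReal.ofReal (Real.exp (-(x ^ 2) / (2 * g * n)))) ∧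
      (n * g * T ≤ x →
        μ {ω | x ≤ ∑ i ∈ Finset.Icc 1 n, X i ω}
          ≤ ENNReal.ofReal (Real.exp (-(T * x) / 2))) := by
  obtain ⟨t₀, ht₀, hint⟩ := hexp
  obtain ⟨T, hT, rfl⟩ : ∃ T, 0 < T ∧ t₀ = 2 * T := ⟨t₀ / 2, half_pos ht₀, by ring⟩
  have hX₁ := integrable_of_integrable_exp_mul_abs (hmeas 1).aemeasurable hint ht₀
  have hquad := integrable_sq_mul_exp_mul_abs (hmeas 1).aemeasurable hint hT
  set g := 2 * μ[fun ω => X 1 ω ^ 2 * exp (T * |X 1 ω|)] + 1 with hg_def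
  have hg : 0 < g := by
    have : 0 ≤ μ[fun ω => X 1 ω ^ 2 * exp (T * |X 1 ω|)] := integral_nonneg fun ω => by positivity
    positivity
  have chernoff : ∀ (n : ℕ) (x t : ℝ), 0 ≤ t → t ≤ T →
      μ {ω | x ≤ ∑ i ∈ Icc 1 n, X i ω} ≤ ENNReal.ofReal (exp (-t * x + n * (g * t ^ 2 / 2))) := by
    intro n x t ht htT
    have habs : |t| ≤ T := abs_le.2 ⟨by linarith, htT⟩
    have hmgf := mgf_le_one_add_sq_mul_integral hX₁ hmean hquad habs
    simpa using measure_sum_ge_le_of_mgf_le hmeas hindep (Icc 1 n) ht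
      (fun i _ => ((hident i).comp (measurable_const_mul t).exp).integrable_iff.2
        (integrable_exp_mul_of_integrable_exp_mul_abs (hmeas 1).aemeasurable hint (by linarith)))
      (fun i _ => by
        rw [mgf_congr_identDistrib (hident i)]
        refine hmgf.trans (le_trans ?_ (add_one_le_exp (g * t ^ 2 / 2)))
        rw [hg_def]
        nlinarith [sq_nonneg t]) x
  refine ⟨g, hg, T, hT, fun n x => ⟨fun hx₀ hxT => ?_, fun hxT => ?_⟩⟩
  · rw [← chernoff_exponent_at_minimiser]
    exact chernoff n x _ (by positivity) (div_le_of_le_mul₀ (by positivity) hT.le (by linarith))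
  · refine (chernoff n x T hT.le le_rfl).trans (ENNReal.ofReal_le_ofReal (exp_le_exp.2 ?_))
    nlinarith
end

section
/- There exists a constant C > 0 such that for all sufficiently large n and all integers i, j, w with 2n^{0.6} < i < j < n^{0.9} − 2n^{0.6}, j − i > 2n^{0.6}, and |w| < n^{0.451}, the double sum Ψ(i,j,w,n) = Σ_{m'∈ℤ} Σ_{m∈ℤ} exp( −(1/4)( m²/i + (m−m')²/(j−i) + (w−m')²/(n^{0.9}−j) − w²/n^{0.9} ) ) satisfies Ψ(i,j,w,n) ≤ C √( i (j−i) (n^{0.9} − j) / n^{0.9} ). -/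
/-!
Completing the square, first in `m` and then in `m'`, splits the summand into a product of two
lattice Gaussians `exp (-(m - x) ^ 2 / (4 s))` of variance parameters `s = ab/(a+b)` and
`t = (a+b)c/(a+b+c)`, where `a = i`, `b = j - i`, `c = n^0.9 - j`; note `s t = abc/(a+b+c)`.
For `s ≥ 1` a lattice Gaussian sum is at most `3 e² √s`: since `u² ≥ 2u - 1`, the Gaussian is
dominated by `e² exp (-|m - ⌊x⌋| / √s)`, whose two-sided geometric series sums to at most
`e² (2√s + 1)`.
-/

open Real

lemma hasSum_pow_natAbs {r : ℝ} (h₀ : 0 ≤ r) (h₁ : r < 1) :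
    HasSum (fun k : ℤ => r ^ k.natAbs) ((1 + r) / (1 - r)) := by
  have hgeom := hasSum_geometric_of_lt_one h₀ h₁
  have h := HasSum.of_nat_of_neg (f := fun k : ℤ => r ^ k.natAbs) hgeom (by simpa using hgeom)
  have : 1 - r ≠ 0 := by linarith
  rwa [Int.natAbs_zero, pow_zero, ← two_mul, ← div_eq_mul_inv, div_sub_one this,
    show 2 - (1 - r) = 1 + r by ring] at h

lemma hasSum_pow_natAbs_sub {r : ℝ} (h₀ : 0 ≤ r) (h₁ : r < 1) (k : ℤ) :
    HasSum (fun m : ℤ => r ^ (m - k).natAbs) ((1 + r) / (1 - r)) :=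
  (Equiv.subRight k).hasSum_iff (f := fun k : ℤ => r ^ k.natAbs) |>.mpr (hasSum_pow_natAbs h₀ h₁)

lemma one_add_div_one_sub_exp_neg_inv_le {q : ℝ} (hq : 0 < q) :
    (1 + exp (-q⁻¹)) / (1 - exp (-q⁻¹)) ≤ 2 * q + 1 := by
  have hr : exp (-q⁻¹) ≤ q / (q + 1) := by
    rw [exp_neg, inv_le_comm₀ (exp_pos _) (by positivity), inv_div, add_div, div_self hq.ne']
    linarith [add_one_le_exp q⁻¹, inv_eq_one_div q]
  have hr1 : q / (q + 1) < 1 := (div_lt_one (by linarith)).mpr (by linarith)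
  calc (1 + exp (-q⁻¹)) / (1 - exp (-q⁻¹)) ≤ (1 + q / (q + 1)) / (1 - q / (q + 1)) := by
        gcongr
    _ = 2 * q + 1 := by field_simp; ring

lemma exp_neg_sub_sq_div_le {s : ℝ} (hs : 1 ≤ s) (x : ℝ) (m : ℤ) :
    exp (-((m - x) ^ 2 / (4 * s))) ≤ exp 2 * exp (-(√s)⁻¹) ^ (m - ⌊x⌋).natAbs := by
  have hq : 1 ≤ √s := by simpa using Real.sqrt_le_sqrt hs
  set y := |(m : ℝ) - x| / (2 * √s)
  have hy : (m - x) ^ 2 / (4 * s) = y ^ 2 := by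
    rw [div_pow, sq_abs, mul_pow, sq_sqrt (by linarith)]
    ring
  have hk : |((m - ⌊x⌋ : ℤ) : ℝ)| ≤ |(m : ℝ) - x| + 1 := by
    have := abs_sub_le (m : ℝ) x ⌊x⌋
    rw [abs_of_nonneg (sub_nonneg.mpr (Int.floor_le x))] at this
    push_cast
    linarith [Int.lt_floor_add_one x]
  have hk' : |((m - ⌊x⌋ : ℤ) : ℝ)| * (√s)⁻¹ ≤ 2 * y + 1 := by
    rw [← div_eq_mul_inv, div_le_iff₀ (by linarith)]
    have : 2 * y * √s = |(m : ℝ) - x| := by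
      simp only [y]
      field_simp
    nlinarith
  rw [← exp_nat_mul, ← exp_add, exp_le_exp, hy, Nat.cast_natAbs, Int.cast_abs]
  nlinarith [sq_nonneg (y - 1)]

lemma summable_exp_neg_sub_sq_div {s : ℝ} (hs : 1 ≤ s) (x : ℝ) :
    Summable fun m : ℤ => exp (-((m - x) ^ 2 / (4 * s))) :=
  .of_nonneg_of_le (fun _ => (exp_pos _).le) (exp_neg_sub_sq_div_le hs x)
    ((hasSum_pow_natAbs_sub (exp_nonneg _)
      (exp_lt_one_iff.mpr (by simpa using hs.trans_lt' one_pos)) ⌊x⌋).mul_left (exp 2)).summable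

lemma tsum_exp_neg_sub_sq_div_le {s : ℝ} (hs : 1 ≤ s) (x : ℝ) :
    ∑' m : ℤ, exp (-((m - x) ^ 2 / (4 * s))) ≤ 3 * exp 2 * √s := by
  have hq : 1 ≤ √s := by simpa using Real.sqrt_le_sqrt hs
  have hr : exp (-(√s)⁻¹) < 1 := exp_lt_one_iff.mpr (by simpa using hs.trans_lt' one_pos)
  have hgeom := (hasSum_pow_natAbs_sub (exp_nonneg _) hr ⌊x⌋).mul_left (exp 2)
  calc ∑' m : ℤ, exp (-((m - x) ^ 2 / (4 * s)))
      ≤ exp 2 * ((1 + exp (-(√s)⁻¹)) / (1 - exp (-(√s)⁻¹))) :=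
        hasSum_le (exp_neg_sub_sq_div_le hs x) (summable_exp_neg_sub_sq_div hs x).hasSum hgeom
    _ ≤ exp 2 * (3 * √s) := by
        gcongr
        linarith [one_add_div_one_sub_exp_neg_inv_le (by linarith : 0 < √s)]
    _ = 3 * exp 2 * √s := by ring

lemma sq_div_add_sq_div_add_sq_div_sub_sq_div_eq {a b c : ℝ} (ha : 0 < a) (hb : 0 < b)
    (hc : 0 < c) (m m' w : ℝ) :
    m ^ 2 / a + (m - m') ^ 2 / b + (w - m') ^ 2 / c - w ^ 2 / (a + b + c)
      = (m' - (a + b) * w / (a + b + c)) ^ 2 / ((a + b) * c / (a + b + c))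
        + (m - a * m' / (a + b)) ^ 2 / (a * b / (a + b)) := by
  field_simp
  ring

theorem tsum_tsum_exp_neg_bridge_le {a b c : ℝ} (ha : 2 ≤ a) (hb : 2 ≤ b) (hc : 2 ≤ c)
    (w : ℝ) :
    ∑' m' : ℤ, ∑' m : ℤ, exp (-(1 / 4) * ((m : ℝ) ^ 2 / a + ((m : ℝ) - m') ^ 2 / b
        + (w - m') ^ 2 / c - w ^ 2 / (a + b + c)))
      ≤ (3 * exp 2) ^ 2 * √(a * b * c / (a + b + c)) := by
  set s := a * b / (a + b) with hs_def
  set t := (a + b) * c / (a + b + c) with ht_def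
  have hs : 1 ≤ s := by rw [le_div_iff₀ (by linarith)]; nlinarith
  have ht : 1 ≤ t := by rw [le_div_iff₀ (by linarith)]; nlinarith
  set G : ℤ → ℝ := fun m' => exp (-((m' - (a + b) * w / (a + b + c)) ^ 2 / (4 * t)))
  have h_inner : ∀ m' : ℤ, ∑' m : ℤ, exp (-(1 / 4) * ((m : ℝ) ^ 2 / a
        + ((m : ℝ) - m') ^ 2 / b + (w - m') ^ 2 / c - w ^ 2 / (a + b + c)))
      = G m' * ∑' m : ℤ, exp (-((m - a * m' / (a + b)) ^ 2 / (4 * s))) := by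
    intro m'
    rw [← tsum_mul_left]
    congr 1 with m
    rw [sq_div_add_sq_div_add_sq_div_sub_sq_div_eq (by linarith) (by linarith) (by linarith),
      ← hs_def, ← ht_def, ← exp_add]
    ring_nf
  have h_bound : ∀ m' : ℤ, ∑' m : ℤ, exp (-(1 / 4) * ((m : ℝ) ^ 2 / a
        + ((m : ℝ) - m') ^ 2 / b + (w - m') ^ 2 / c - w ^ 2 / (a + b + c)))
      ≤ G m' * (3 * exp 2 * √s) := fun m' => by
    rw [h_inner]
    exact mul_le_mul_of_nonneg_left (tsum_exp_neg_sub_sq_div_le hs _) (exp_pos _).le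
  have hG := summable_exp_neg_sub_sq_div ht ((a + b) * w / (a + b + c))
  calc _ ≤ ∑' m' : ℤ, G m' * (3 * exp 2 * √s) :=
        Summable.tsum_le_tsum h_bound
          (.of_nonneg_of_le (fun _ => tsum_nonneg fun _ => (exp_pos _).le) h_bound
            (hG.mul_right _))
          (hG.mul_right _)
    _ = (∑' m' : ℤ, G m') * (3 * exp 2 * √s) := tsum_mul_right
    _ ≤ (3 * exp 2 * √t) * (3 * exp 2 * √s) := by
        gcongr
        exact tsum_exp_neg_sub_sq_div_le ht _
    _ = (3 * exp 2) ^ 2 * √(a * b * c / (a + b + c)) := by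
        rw [mul_mul_mul_comm, ← sq, ← sqrt_mul (by positivity), hs_def, ht_def]
        congr 2
        field_simp

/-- Gaussian double-sum bound: there is a constant `C > 0` such that for all
sufficiently large `n` and all `i, j, w` with `2n^{0.6} < i < j < n^{0.9} - 2n^{0.6}`,
`j - i > 2n^{0.6}` and `|w| < n^{0.451}`, the double sum
`Ψ(i,j,w,n) = Σ_{m',m ∈ ℤ} exp(-(1/4)(m²/i + (m-m')²/(j-i) + (w-m')²/(n^{0.9}-j) - w²/n^{0.9}))`
is at most `C √(i (j-i) (n^{0.9} - j) / n^{0.9})`. -/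
theorem gaussian_double_sum_bound :
    ∃ C : ℝ, 0 < C ∧ ∃ N : ℕ, ∀ n : ℕ, N ≤ n → ∀ i j : ℕ, ∀ w : ℤ,
      2 * (n : ℝ) ^ (0.6 : ℝ) < (i : ℝ) → i < j →
      (j : ℝ) < (n : ℝ) ^ (0.9 : ℝ) - 2 * (n : ℝ) ^ (0.6 : ℝ) →
      2 * (n : ℝ) ^ (0.6 : ℝ) < (j : ℝ) - (i : ℝ) →
      |(w : ℝ)| < (n : ℝ) ^ (0.451 : ℝ) →
      (∑' m' : ℤ, ∑' m : ℤ, Real.exp (-(1 / 4) *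
          ((m : ℝ) ^ 2 / (i : ℝ) + ((m : ℝ) - (m' : ℝ)) ^ 2 / ((j : ℝ) - (i : ℝ))
            + ((w : ℝ) - (m' : ℝ)) ^ 2 / ((n : ℝ) ^ (0.9 : ℝ) - (j : ℝ))
            - (w : ℝ) ^ 2 / (n : ℝ) ^ (0.9 : ℝ))))
        ≤ C * Real.sqrt ((i : ℝ) * ((j : ℝ) - (i : ℝ))
            * ((n : ℝ) ^ (0.9 : ℝ) - (j : ℝ)) / (n : ℝ) ^ (0.9 : ℝ)) := by
  refine ⟨(3 * exp 2) ^ 2, by positivity, 1, fun n hn i j w hi _ hj hji _ => ?_⟩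
  have h_one : (1 : ℝ) ≤ (n : ℝ) ^ (0.6 : ℝ) := one_le_rpow (by exact_mod_cast hn) (by norm_num)
  have h_total : (i : ℝ) + ((j : ℝ) - i) + ((n : ℝ) ^ (0.9 : ℝ) - j) = (n : ℝ) ^ (0.9 : ℝ) := by
    ring
  simpa only [h_total] using
    tsum_tsum_exp_neg_bridge_le (a := i) (b := j - i) (c := (n : ℝ) ^ (0.9 : ℝ) - j)
      (by linarith) (by linarith) (by linarith) w
end
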